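/- arXiv:1412.7011 — 11 statements merged into one kernel-verified Lean document; each statement's English description precedes it below -/
import Mathlib

section
/- Let the communication graph be a fixed, undirected, connected graph G with constant symmetric weights a_{ij} = a_{ji} > 0, and suppose Assumptions A1 and A3 hold. Then for every ε > 0 there exists K_ε > 0 such that for all coupling gains K ≥ K_ε, global ε-synchronization is achieved: for every initial value x(0) ∈ ℝ^{mN}, limsup_{t→∞} |x_i(t) − x_j(t)| ≤ ε for all i, j. -/
open Filter Set

local notation "⟪" x ", " y "⟫" => inner (𝕜 := ℝ) x y

section aux
variable {E : Type*} [NormedAddCommGroup E] [InnerProductSpace ℝ E] [CompleteSpace E] {N : ℕ}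

lemma convex_grad_ineq {φ : E → ℝ} {g x : E} (hconv : ConvexOn ℝ Set.univ φ)
    (hgrad : HasGradientAt φ g x) (y : E) : ⟪g, y - x⟫ ≤ φ y - φ x := by
  have hline : HasDerivAt (fun s : ℝ => s • (y - x) + x) (y - x) 0 := by
    simpa using ((hasDerivAt_id (0:ℝ)).smul_const (y - x)).add_const x
  have hq : HasDerivAt (fun s : ℝ => φ (s • (y - x) + x)) ⟪g, y - x⟫ 0 := by
    have hx0 : HasFDerivAt φ ((InnerProductSpace.toDual ℝ E) g) ((0:ℝ) • (y - x) + x) := by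
      simpa using hasGradientAt_iff_hasFDerivAt.mp hgrad
    have := hx0.comp_hasDerivAt (0:ℝ) hline
    simpa [InnerProductSpace.toDual_apply_apply, Function.comp_def] using this
  have hqc : ConvexOn ℝ Set.univ (fun s : ℝ => φ (s • (y - x) + x)) := by
    have := hconv.comp_affineMap (AffineMap.lineMap x y : ℝ →ᵃ[ℝ] E)
    simpa [Function.comp_def, AffineMap.lineMap_apply, vsub_eq_sub, vadd_eq_add] using this
  have h := hqc.le_slope_of_hasDerivAt (mem_univ (0:ℝ)) (mem_univ (1:ℝ)) zero_lt_one hq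
  simpa [slope_def_field] using h

end aux

/-- The function `F_G(x; K) = ∑ᵢ Fᵢ(xᵢ) + (K/2) ∑_{{i,j}∈E} aᵢⱼ |xⱼ - xᵢ|²`
(the double sum over ordered pairs counts every undirected edge twice, hence the
extra division by 2). -/
noncomputable def FG {E : Type*} [NormedAddCommGroup E] {N : ℕ}
    (F : Fin N → E → ℝ) (a : Fin N → Fin N → ℝ) (K : ℝ) (x : Fin N → E) : ℝ :=
  (∑ i, F i (x i)) + (K / 2) * ((∑ i, ∑ j, a i j * ‖x j - x i‖ ^ 2) / 2)

section aux2
variable {E : Type*} [NormedAddCommGroup E] [InnerProductSpace ℝ E] [CompleteSpace E] {N : ℕ}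

noncomputable def Wc (a : Fin N → Fin N → ℝ) (x : Fin N → E) (i : Fin N) : E :=
  ∑ j, a i j • (x j - x i)

lemma symmetrize {a : Fin N → Fin N → ℝ} (hsymm : ∀ i j, a i j = a j i)
    (x v : Fin N → E) :
    ∑ i, ∑ j, a i j * ⟪x j - x i, v j - v i⟫ = -2 * ∑ j, ⟪Wc a x j, v j⟫ := by
  have hU : ∑ i, ∑ j, a i j * ⟪x j - x i, v i⟫
      = - ∑ i, ∑ j, a i j * ⟪x j - x i, v j⟫ := by
    rw [Finset.sum_comm]
    rw [← Finset.sum_neg_distrib]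
    refine Finset.sum_congr rfl fun i _ => ?_
    rw [← Finset.sum_neg_distrib]
    refine Finset.sum_congr rfl fun j _ => ?_
    rw [hsymm j i, ← neg_sub (x j) (x i), inner_neg_left]
    ring
  have hT : ∑ i, ∑ j, a i j * ⟪x j - x i, v j⟫ = - ∑ j, ⟪Wc a x j, v j⟫ := by
    rw [Finset.sum_comm, ← Finset.sum_neg_distrib]
    refine Finset.sum_congr rfl fun j _ => ?_
    rw [Wc, sum_inner, ← Finset.sum_neg_distrib]
    refine Finset.sum_congr rfl fun i _ => ?_
    rw [real_inner_smul_left, hsymm j i, ← neg_sub (x j) (x i), inner_neg_left]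
    ring
  calc ∑ i, ∑ j, a i j * ⟪x j - x i, v j - v i⟫
      = ∑ i, ∑ j, (a i j * ⟪x j - x i, v j⟫ - a i j * ⟪x j - x i, v i⟫) := by
        refine Finset.sum_congr rfl fun i _ => Finset.sum_congr rfl fun j _ => ?_
        rw [inner_sub_right]; ring
    _ = (∑ i, ∑ j, a i j * ⟪x j - x i, v j⟫) - ∑ i, ∑ j, a i j * ⟪x j - x i, v i⟫ := by
        rw [← Finset.sum_sub_distrib]
        exact Finset.sum_congr rfl fun i _ => Finset.sum_sub_distrib _ _
    _ = -2 * ∑ j, ⟪Wc a x j, v j⟫ := by rw [hU, hT]; ring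

lemma quad_expand_ge {a : Fin N → Fin N → ℝ} (hnonneg : ∀ i j, 0 ≤ a i j) (x y : Fin N → E) :
    (∑ i, ∑ j, a i j * ‖x j - x i‖ ^ 2)
      + ∑ i, ∑ j, a i j * (2 * ⟪x j - x i, (y j - x j) - (y i - x i)⟫)
      ≤ ∑ i, ∑ j, a i j * ‖y j - y i‖ ^ 2 := by
  have h : ∀ p : Fin N, ∀ q : Fin N,
      a p q * ‖x q - x p‖ ^ 2 + a p q * (2 * ⟪x q - x p, (y q - x q) - (y p - x p)⟫)
        ≤ a p q * ‖y q - y p‖ ^ 2 := by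
    intro p q
    have hexp := norm_add_sq_real (x q - x p) ((y q - x q) - (y p - x p))
    rw [show (x q - x p) + ((y q - x q) - (y p - x p)) = y q - y p by abel] at hexp
    have h2 : a p q * ‖y q - y p‖ ^ 2
        = a p q * ‖x q - x p‖ ^ 2 + a p q * (2 * ⟪x q - x p, (y q - x q) - (y p - x p)⟫)
          + a p q * ‖(y q - x q) - (y p - x p)‖ ^ 2 := by rw [hexp]; ring
    linarith [mul_nonneg (hnonneg p q) (sq_nonneg ‖(y q - x q) - (y p - x p)‖)]
  calc (∑ i, ∑ j, a i j * ‖x j - x i‖ ^ 2)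
        + ∑ i, ∑ j, a i j * (2 * ⟪x j - x i, (y j - x j) - (y i - x i)⟫)
      = ∑ i, ∑ j, (a i j * ‖x j - x i‖ ^ 2
          + a i j * (2 * ⟪x j - x i, (y j - x j) - (y i - x i)⟫)) := by
        rw [← Finset.sum_add_distrib]
        exact Finset.sum_congr rfl fun i _ => (Finset.sum_add_distrib).symm
    _ ≤ ∑ i, ∑ j, a i j * ‖y j - y i‖ ^ 2 :=
        Finset.sum_le_sum fun i _ => Finset.sum_le_sum fun j _ => h i j

end aux2

section aux3
variable {E : Type*} [NormedAddCommGroup E] [InnerProductSpace ℝ E] [CompleteSpace E] {N : ℕ}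
variable {F : Fin N → E → ℝ} {f : Fin N → E → E} {a : Fin N → Fin N → ℝ}

lemma hasDerivWithinAt_FG_comp
    (hgrad : ∀ i z, HasGradientAt (F i) (-(f i z)) z)
    (hsymm : ∀ i j, a i j = a j i) (K : ℝ)
    {c : ℝ → Fin N → E} {v : Fin N → E} {s : Set ℝ} {t₀ : ℝ}
    (hc : ∀ i, HasDerivWithinAt (fun t => c t i) (v i) s t₀) :
    HasDerivWithinAt (fun t => FG F a K (c t))
      (∑ i, ⟪-(f i (c t₀ i) + K • Wc a (c t₀) i), v i⟫) s t₀ := by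
  have h1 : ∀ i, HasDerivWithinAt (fun t => F i (c t i)) ⟪-(f i (c t₀ i)), v i⟫ s t₀ := by
    intro i
    have := (hasGradientAt_iff_hasFDerivAt.mp (hgrad i (c t₀ i))).comp_hasDerivWithinAt t₀ (hc i)
    simpa [InnerProductSpace.toDual_apply_apply, Function.comp_def] using this
  have h2 : ∀ i j, HasDerivWithinAt (fun t => ‖c t j - c t i‖ ^ 2)
      (2 * ⟪c t₀ j - c t₀ i, v j - v i⟫) s t₀ := by
    intro i j
    have hd := ((hc j).fun_sub (hc i)).inner ℝ ((hc j).fun_sub (hc i))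
    have heq : (fun t => ⟪c t j - c t i, c t j - c t i⟫) = fun t => ‖c t j - c t i‖ ^ 2 := by
      funext t; exact real_inner_self_eq_norm_sq _
    rw [heq] at hd
    convert hd using 1
    · rfl
    · rfl
    rw [real_inner_comm]; ring
  have hmain : HasDerivWithinAt (fun t => FG F a K (c t))
      ((∑ i, ⟪-(f i (c t₀ i)), v i⟫)
        + (K / 2) * ((∑ i, ∑ j, a i j * (2 * ⟪c t₀ j - c t₀ i, v j - v i⟫)) / 2)) s t₀ := by
    apply HasDerivWithinAt.add
    · exact HasDerivWithinAt.fun_sum fun i _ => h1 i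
    · exact (((HasDerivWithinAt.fun_sum fun i _ => (HasDerivWithinAt.fun_sum fun j _ =>
        (h2 i j).const_mul (a i j))).div_const 2).const_mul (K / 2))
  convert hmain using 1
  have hsum : ∑ i, ∑ j, a i j * (2 * ⟪c t₀ j - c t₀ i, v j - v i⟫)
      = 2 * ∑ i, ∑ j, a i j * ⟪c t₀ j - c t₀ i, v j - v i⟫ := by
    rw [Finset.mul_sum]
    refine Finset.sum_congr rfl fun i _ => ?_
    rw [Finset.mul_sum]
    exact Finset.sum_congr rfl fun j _ => by ring
  rw [hsum, symmetrize hsymm]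
  rw [show ∀ z : ℝ, (∑ i, ⟪-(f i (c t₀ i)), v i⟫) + (K/2) * (2 * (-2 * z) / 2)
      = (∑ i, ⟪-(f i (c t₀ i)), v i⟫) - K * z from fun z => by ring]
  rw [Finset.mul_sum, ← Finset.sum_sub_distrib]
  refine Finset.sum_congr rfl fun i _ => ?_
  rw [neg_add, inner_add_left, inner_neg_left (K • Wc a (c t₀) i), real_inner_smul_left]
  ring

lemma FG_grad_ineq
    (hconv : ∀ i, ConvexOn ℝ Set.univ (F i))
    (hgrad : ∀ i z, HasGradientAt (F i) (-(f i z)) z)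
    (hsymm : ∀ i j, a i j = a j i) (hnonneg : ∀ i j, 0 ≤ a i j)
    {K : ℝ} (hK : 0 ≤ K) (x y : Fin N → E) :
    ∑ i, ⟪-(f i (x i) + K • Wc a x i), y i - x i⟫ ≤ FG F a K y - FG F a K x := by
  have hsplit : ∑ i, ⟪-(f i (x i) + K • Wc a x i), y i - x i⟫
      = (∑ i, ⟪-(f i (x i)), y i - x i⟫) - K * ∑ i, ⟪Wc a x i, y i - x i⟫ := by
    rw [Finset.mul_sum, ← Finset.sum_sub_distrib]
    refine Finset.sum_congr rfl fun i _ => ?_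
    rw [neg_add, inner_add_left, inner_neg_left (K • Wc a x i), real_inner_smul_left]
    ring
  have hF : ∑ i, ⟪-(f i (x i)), y i - x i⟫ ≤ (∑ i, F i (y i)) - ∑ i, F i (x i) := by
    rw [← Finset.sum_sub_distrib]
    exact Finset.sum_le_sum fun i _ => convex_grad_ineq (hconv i) (hgrad i (x i)) (y i)
  have hQ : -K * ∑ i, ⟪Wc a x i, y i - x i⟫
      ≤ (K / 2) * ((∑ i, ∑ j, a i j * ‖y j - y i‖ ^ 2) / 2)
        - (K / 2) * ((∑ i, ∑ j, a i j * ‖x j - x i‖ ^ 2) / 2) := by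
    have hs := symmetrize hsymm x (fun i => y i - x i)
    have hq := quad_expand_ge hnonneg x y
    have h2s : ∑ i, ∑ j, a i j * (2 * ⟪x j - x i, (y j - x j) - (y i - x i)⟫)
        = 2 * ∑ i, ∑ j, a i j * ⟪x j - x i, (y j - x j) - (y i - x i)⟫ := by
      rw [Finset.mul_sum]
      refine Finset.sum_congr rfl fun i _ => ?_
      rw [Finset.mul_sum]
      exact Finset.sum_congr rfl fun j _ => by ring
    rw [h2s, hs] at hq
    have h4 : (-4:ℝ) * ∑ j, ⟪Wc a x j, y j - x j⟫
        ≤ (∑ i, ∑ j, a i j * ‖y j - y i‖ ^ 2) - ∑ i, ∑ j, a i j * ‖x j - x i‖ ^ 2 := by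
      linarith
    have h5 := mul_le_mul_of_nonneg_left h4 (by linarith : (0:ℝ) ≤ K / 4)
    linarith
  rw [hsplit]
  have hFG : FG F a K y - FG F a K x
      = ((∑ i, F i (y i)) - ∑ i, F i (x i))
        + ((K / 2) * ((∑ i, ∑ j, a i j * ‖y j - y i‖ ^ 2) / 2)
          - (K / 2) * ((∑ i, ∑ j, a i j * ‖x j - x i‖ ^ 2) / 2)) := by
    simp only [FG]; ring
  rw [hFG]
  linarith

end aux3

section aux4
variable {E : Type*} [NormedAddCommGroup E] [InnerProductSpace ℝ E] {N : ℕ}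

lemma path_bound {a : Fin N → Fin N → ℝ} (hnonneg : ∀ i j, 0 ≤ a i j) {i j : Fin N}
    (h : Relation.ReflTransGen (fun p q => 0 < a p q) i j) :
    ∃ c : ℝ, 0 ≤ c ∧ ∀ x : Fin N → E,
      ‖x i - x j‖ ≤ c * Real.sqrt (∑ p, ∑ q, a p q * ‖x q - x p‖ ^ 2) := by
  induction h with
  | refl => exact ⟨0, le_refl 0, fun x => by simp⟩
  | @tail b q hib hbq ih =>
    obtain ⟨cb, hcb0, hcb⟩ := ih
    refine ⟨cb + Real.sqrt (1 / a b q), by positivity, fun x => ?_⟩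
    set S := ∑ p, ∑ r, a p r * ‖x r - x p‖ ^ 2 with hS
    have hS0 : 0 ≤ S := Finset.sum_nonneg fun p _ => Finset.sum_nonneg fun r _ =>
      mul_nonneg (hnonneg p r) (sq_nonneg _)
    have hedge : a b q * ‖x q - x b‖ ^ 2 ≤ S := by
      calc a b q * ‖x q - x b‖ ^ 2
          ≤ ∑ r, a b r * ‖x r - x b‖ ^ 2 :=
            Finset.single_le_sum (f := fun r => a b r * ‖x r - x b‖ ^ 2)
              (fun r _ => mul_nonneg (hnonneg b r) (sq_nonneg _)) (Finset.mem_univ q)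
        _ ≤ S := by
            rw [hS]
            exact Finset.single_le_sum (f := fun p => ∑ r, a p r * ‖x r - x p‖ ^ 2)
              (fun p _ => Finset.sum_nonneg fun r _ => mul_nonneg (hnonneg p r) (sq_nonneg _))
              (Finset.mem_univ b)
    have hbq' : ‖x b - x q‖ ≤ Real.sqrt (1 / a b q) * Real.sqrt S := by
      rw [← Real.sqrt_mul (by positivity) S]
      rw [norm_sub_rev]
      have h1 : ‖x q - x b‖ ^ 2 ≤ 1 / a b q * S := by
        rw [div_mul_eq_mul_div, le_div_iff₀ hbq, one_mul, mul_comm]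
        exact hedge
      calc ‖x q - x b‖ = Real.sqrt (‖x q - x b‖ ^ 2) := (Real.sqrt_sq (norm_nonneg _)).symm
        _ ≤ Real.sqrt (1 / a b q * S) := Real.sqrt_le_sqrt h1
    calc ‖x i - x q‖ ≤ ‖x i - x b‖ + ‖x b - x q‖ := by
          simpa [dist_eq_norm] using dist_triangle (x i) (x b) (x q)
      _ ≤ cb * Real.sqrt S + Real.sqrt (1 / a b q) * Real.sqrt S := by
          exact add_le_add (hcb x) hbq'
      _ = (cb + Real.sqrt (1 / a b q)) * Real.sqrt S := by ring

end aux4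

/-- **Theorem 2** (approximate synchronization over a fixed undirected connected graph).
Under Assumptions A1 and A3, for every `ε > 0` there is a gain `K_ε > 0` such that for
every `K ≥ K_ε` global `ε`-synchronization is achieved. -/
theorem statement1
    {m N : ℕ} (hm : 0 < m) (hN : 0 < N)
    (f : Fin N → EuclideanSpace ℝ (Fin m) → EuclideanSpace ℝ (Fin m))
    (F : Fin N → EuclideanSpace ℝ (Fin m) → ℝ)
    -- Assumption A1
    (hA1smooth : ∀ i, ContDiff ℝ 1 (F i))
    (hA1convex : ∀ i, ConvexOn ℝ Set.univ (F i))
    (hA1argmin : ∀ i, ∃ z, IsMinOn (F i) Set.univ z)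
    (hA1grad : ∀ i z, HasGradientAt (F i) (-(f i z)) z)
    -- fixed undirected connected graph with constant symmetric positive weights
    (a : Fin N → Fin N → ℝ)
    (hsymm : ∀ i j, a i j = a j i)
    (hnonneg : ∀ i j, 0 ≤ a i j)
    (hdiag : ∀ i, a i i = 0)
    (hconn : ∀ i j : Fin N, Relation.ReflTransGen (fun p q => 0 < a p q) i j)
    -- Assumption A3
    (hA3i : ∃ z, IsMinOn (fun z => ∑ i, F i z) Set.univ z)
    (hA3ii : ∀ K : ℝ, 0 ≤ K → ∃ x, IsMinOn (FG F a K) Set.univ x)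
    (hA3iii : Bornology.IsBounded
      {x : Fin N → EuclideanSpace ℝ (Fin m) | ∃ K : ℝ, 0 ≤ K ∧ IsMinOn (FG F a K) Set.univ x}) :
    -- conclusion: global ε-synchronization for all sufficiently large gains
    ∀ ε : ℝ, 0 < ε → ∃ Kε : ℝ, 0 < Kε ∧ ∀ K : ℝ, Kε ≤ K →
      ∀ x : ℝ → Fin N → EuclideanSpace ℝ (Fin m),
        (∀ i, ∀ t : ℝ, 0 ≤ t → HasDerivWithinAt (fun s => x s i)
            (f i (x t i) + K • ∑ j, a i j • (x t j - x t i)) (Set.Ici 0) t) →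
        ∀ i j, limsup (fun t => dist (x t i) (x t j)) atTop ≤ ε := by
  intro ε hε
  classical
  -- constants from the assumptions
  choose zm hzm using hA1argmin
  obtain ⟨zs, hzs⟩ := hA3i
  set M0 : ℝ := ∑ i, F i (zm i) with hM0def
  set Fmin : ℝ := ∑ i, F i zs with hFmindef
  have hM0le : ∀ y : Fin N → EuclideanSpace ℝ (Fin m), M0 ≤ ∑ i, F i (y i) := fun y =>
    Finset.sum_le_sum fun i _ => hzm i (Set.mem_univ (y i))
  set C : ℝ := Fmin + 1 - M0 with hCdef
  have hC : 1 ≤ C := by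
    have := hM0le (fun _ => zs)
    simp only [← hFmindef] at this
    linarith
  have hC0 : 0 < C := lt_of_lt_of_le one_pos hC
  -- path constants
  have hpath := fun i j => path_bound (E := EuclideanSpace ℝ (Fin m)) hnonneg (hconn i j)
  choose cc hcc0 hcc using hpath
  set c : ℝ := 1 + ∑ p, ∑ q, cc p q with hcdef
  have hc1 : (1:ℝ) ≤ c := by
    have : (0:ℝ) ≤ ∑ p, ∑ q, cc p q :=
      Finset.sum_nonneg fun p _ => Finset.sum_nonneg fun q _ => hcc0 p q
    linarith
  have hc0 : 0 < c := lt_of_lt_of_le one_pos hc1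
  have hccle : ∀ p q, cc p q ≤ c := by
    intro p q
    have h1 : cc p q ≤ ∑ r, cc p r :=
      Finset.single_le_sum (f := fun r => cc p r) (fun r _ => hcc0 p r) (Finset.mem_univ q)
    have h2 : ∑ r, cc p r ≤ ∑ p', ∑ r, cc p' r :=
      Finset.single_le_sum (f := fun p' => ∑ r, cc p' r)
        (fun p' _ => Finset.sum_nonneg fun r _ => hcc0 p' r) (Finset.mem_univ p)
    linarith
  refine ⟨max 1 (4 * C * c ^ 2 / ε ^ 2), lt_of_lt_of_le one_pos (le_max_left _ _), ?_⟩
  intro K hK x hode i j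
  have hK1 : (1:ℝ) ≤ K := le_trans (le_max_left _ _) hK
  have hK0 : (0:ℝ) < K := lt_of_lt_of_le one_pos hK1
  obtain ⟨xs, hxs⟩ := hA3ii K hK0.le
  have hmin : ∀ y, FG F a K xs ≤ FG F a K y := fun y => hxs (Set.mem_univ y)
  -- the trajectory derivative as a vector field
  set V : ℝ → Fin N → EuclideanSpace ℝ (Fin m) :=
    fun t p => f p (x t p) + K • Wc a (x t) p with hVdef
  have hode' : ∀ p, ∀ t : ℝ, 0 ≤ t →
      HasDerivWithinAt (fun s => x s p) (V t p) (Set.Ici 0) t := fun p t ht => hode p t ht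
  set Φ : ℝ → ℝ := fun t => FG F a K (x t) with hΦdef
  have hΦd : ∀ t, 0 ≤ t → HasDerivWithinAt Φ
      (∑ p, ⟪-(V t p), V t p⟫) (Set.Ici 0) t := fun t ht =>
    hasDerivWithinAt_FG_comp hA1grad hsymm K (fun p => hode' p t ht)
  have hΦ'le : ∀ t, (∑ p, ⟪-(V t p), V t p⟫) ≤ 0 := by
    intro t
    apply Finset.sum_nonpos
    intro p _
    rw [inner_neg_left]
    simpa using real_inner_self_nonneg (x := V t p)
  have hΦcont : ContinuousOn Φ (Set.Ici 0) := fun t ht => (hΦd t ht).continuousWithinAt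
  have hΦanti : AntitoneOn Φ (Set.Ici 0) := by
    apply antitoneOn_of_hasDerivWithinAt_nonpos (convex_Ici 0) hΦcont
      (f' := fun t => ∑ p, ⟪-(V t p), V t p⟫)
    · intro t ht
      rw [interior_Ici] at ht
      exact (hΦd t (le_of_lt ht)).mono (by rw [interior_Ici]; exact fun u hu => Set.mem_Ici.2 (le_of_lt (Set.mem_Ioi.1 hu)))
    · intro t _
      exact hΦ'le t
  -- squared distance to the minimizer
  set G : ℝ → ℝ := fun t => ∑ p, ⟪x t p - xs p, x t p - xs p⟫ with hGdef
  have hGd : ∀ t, 0 ≤ t → HasDerivWithinAt G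
      (∑ p, 2 * ⟪x t p - xs p, V t p⟫) (Set.Ici 0) t := by
    intro t ht
    apply HasDerivWithinAt.fun_sum
    intro p _
    have hd := ((hode' p t ht).sub_const (xs p)).inner ℝ ((hode' p t ht).sub_const (xs p))
    convert hd using 1
    · rfl
    rw [real_inner_comm]; ring
  have hG0 : ∀ t, 0 ≤ G t := fun t =>
    Finset.sum_nonneg fun p _ => real_inner_self_nonneg
  have hGcont : ContinuousOn G (Set.Ici 0) := fun t ht => (hGd t ht).continuousWithinAt
  -- key convexity inequality
  have hkey : ∀ t, 0 ≤ t →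
      (∑ p, 2 * ⟪x t p - xs p, V t p⟫) ≤ 2 * (FG F a K xs - Φ t) := by
    intro t ht
    have h1 := FG_grad_ineq hA1convex hA1grad hsymm hnonneg hK0.le (x t) xs
    have h2 : ∑ p, 2 * ⟪x t p - xs p, V t p⟫
        = 2 * ∑ p, ⟪-(V t p), xs p - x t p⟫ := by
      rw [Finset.mul_sum]
      refine Finset.sum_congr rfl fun p _ => ?_
      rw [inner_neg_left, inner_sub_right, inner_sub_left,
        real_inner_comm (x t p) (V t p), real_inner_comm (xs p) (V t p)]
      ring
    rw [h2]
    have : ∑ p, ⟪-(V t p), xs p - x t p⟫ ≤ FG F a K xs - Φ t := h1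
    linarith
  -- value decay estimate
  have hval : ∀ T : ℝ, 0 < T → Φ T ≤ FG F a K xs + G 0 / (2 * T) := by
    intro T hT
    set A : ℝ := Φ T - FG F a K xs with hAdef
    have hA0 : 0 ≤ A := sub_nonneg.2 (hmin (x T))
    have hsub : interior (Set.Icc (0:ℝ) T) ⊆ Set.Ici 0 := by
      rw [interior_Icc]; exact fun u hu => le_of_lt hu.1
    have hψanti : AntitoneOn (fun t => G t + 2 * A * t) (Set.Icc 0 T) := by
      apply antitoneOn_of_hasDerivWithinAt_nonpos (convex_Icc 0 T)
        (f' := fun t => (∑ p, 2 * ⟪x t p - xs p, V t p⟫) + 2 * A)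
      · exact (hGcont.mono (Set.Icc_subset_Ici_self)).add
          ((continuous_const.mul continuous_id).continuousOn)
      · intro t ht
        have ht' := hsub ht
        refine ((hGd t ht').mono hsub).add ?_
        have : HasDerivAt (fun t : ℝ => 2 * A * t) (2 * A) t := by
          simpa using (hasDerivAt_id t).const_mul (2 * A)
        exact this.hasDerivWithinAt
      · intro t ht
        rw [interior_Icc] at ht
        have h1 := hkey t (le_of_lt ht.1)
        have h2 : Φ T ≤ Φ t := hΦanti (Set.mem_Ici.2 (le_of_lt ht.1))
          (Set.mem_Ici.2 (le_trans (le_of_lt ht.1) (le_of_lt ht.2))) (le_of_lt ht.2)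
        rw [hAdef]
        linarith
    have hψ := hψanti (Set.mem_Icc.2 ⟨le_refl 0, hT.le⟩)
      (Set.mem_Icc.2 ⟨hT.le, le_refl T⟩) hT.le
    simp only [mul_zero, add_zero] at hψ
    have hGT := hG0 T
    have hA' : A ≤ G 0 / (2 * T) := by
      rw [le_div_iff₀ (by linarith : (0:ℝ) < 2 * T)]
      linarith
    rw [hAdef] at hA'
    linarith
  -- choice of starting time
  set T₀ : ℝ := max 1 (G 0 / 2) with hT₀def
  have hT₀1 : (1:ℝ) ≤ T₀ := le_max_left _ _
  have hT₀0 : (0:ℝ) < T₀ := lt_of_lt_of_le one_pos hT₀1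
  have hFGxs : FG F a K xs ≤ Fmin := by
    have h := hmin (fun _ => zs)
    have : FG F a K (fun _ => zs) = Fmin := by
      simp [FG, ← hFmindef]
    linarith
  have hGT₀ : G 0 / (2 * T₀) ≤ 1 := by
    rw [div_le_one (by linarith : (0:ℝ) < 2 * T₀)]
    have : G 0 / 2 ≤ T₀ := le_max_right _ _
    linarith
  -- disagreement bound for large times
  have hSbound : ∀ t, T₀ ≤ t →
      (∑ p, ∑ q, a p q * ‖x t q - x t p‖ ^ 2) ≤ 4 * C / K := by
    intro t ht
    have ht0 : (0:ℝ) ≤ t := le_trans (le_trans zero_le_one hT₀1) ht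
    have h1 : Φ t ≤ Φ T₀ := hΦanti (Set.mem_Ici.2 hT₀0.le) (Set.mem_Ici.2 ht0) ht
    have h2 := hval T₀ hT₀0
    have h3 : M0 + (K / 2) * ((∑ p, ∑ q, a p q * ‖x t q - x t p‖ ^ 2) / 2) ≤ Φ t := by
      have := hM0le (x t)
      rw [hΦdef]
      simp only [FG]
      linarith
    have h4 : (K / 2) * ((∑ p, ∑ q, a p q * ‖x t q - x t p‖ ^ 2) / 2) ≤ C := by
      linarith
    rw [le_div_iff₀ hK0]
    nlinarith
  -- conclusion
  have hfinal : ∀ t, T₀ ≤ t → dist (x t i) (x t j) ≤ ε := by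
    intro t ht
    rw [dist_eq_norm]
    set S : ℝ := ∑ p, ∑ q, a p q * ‖x t q - x t p‖ ^ 2 with hSdef
    have hS0 : 0 ≤ S := Finset.sum_nonneg fun p _ => Finset.sum_nonneg fun q _ =>
      mul_nonneg (hnonneg p q) (sq_nonneg _)
    have hSb : S ≤ 4 * C / K := hSbound t ht
    have h1 : ‖x t i - x t j‖ ≤ c * Real.sqrt S := by
      calc ‖x t i - x t j‖ ≤ cc i j * Real.sqrt S := hcc i j (x t)
        _ ≤ c * Real.sqrt S :=
          mul_le_mul_of_nonneg_right (hccle i j) (Real.sqrt_nonneg _)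
    have h2 : Real.sqrt S ≤ ε / c := by
      have hKge : 4 * C * c ^ 2 / ε ^ 2 ≤ K := le_trans (le_max_right _ _) hK
      have hd : 4 * C / K ≤ (ε / c) ^ 2 := by
        rw [div_pow, div_le_div_iff₀ hK0 (by positivity)]
        rw [div_le_iff₀ (by positivity : (0:ℝ) < ε ^ 2)] at hKge
        linarith [mul_comm K (ε ^ 2)]
      have hle : S ≤ (ε / c) ^ 2 := le_trans hSb hd
      calc Real.sqrt S ≤ Real.sqrt ((ε / c) ^ 2) := Real.sqrt_le_sqrt hle
        _ = ε / c := Real.sqrt_sq (by positivity)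
    calc ‖x t i - x t j‖ ≤ c * Real.sqrt S := h1
      _ ≤ c * (ε / c) := mul_le_mul_of_nonneg_left h2 hc0.le
      _ = ε := by field_simp
  refine limsup_le_of_le ?_ ?_
  · exact isCoboundedUnder_le_of_eventually_le atTop
      (x := 0) (Eventually.of_forall fun t => dist_nonneg)
  · exact eventually_atTop.2 ⟨T₀, hfinal⟩
end

section
/- Suppose Assumption A1 holds and the function x = (x_1,…,x_N) ↦ Σ_{i=1}^N F_i(x_i) from ℝ^{mN} to ℝ is coercive (it tends to +∞ as |x| → ∞). Then for each i the set {z ∈ ℝ^m : f_i(z) = 0} is nonempty and bounded, and Assumption A3 holds for every fixed undirected graph G with positive symmetric weights. -/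
open Filter

section Aux

open Bornology

/-- Sublevel sets of a coercive function are bounded. -/
lemma aux_sublevel_bounded {X : Type*} [NormedAddCommGroup X] {g : X → ℝ}
    (hg : Tendsto g (cobounded X) atTop) (c : ℝ) :
    IsBounded {x | g x ≤ c} := by
  have h : IsCobounded {x | c < g x} := hg.eventually (eventually_gt_atTop c)
  have h2 := h.compl
  have : {x | c < g x}ᶜ = {x | g x ≤ c} := by ext x; simp [not_lt]
  rwa [this] at h2

lemma aux_tendsto_cobounded {X Y : Type*} [NormedAddCommGroup X] [NormedAddCommGroup Y]
    {u : X → Y} (h : ∀ x, ‖x‖ ≤ ‖u x‖) :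
    Tendsto u (cobounded X) (cobounded Y) := by
  rw [← comap_norm_atTop (E := Y), tendsto_comap_iff]
  exact tendsto_atTop_mono h tendsto_norm_cobounded_atTop

variable {m : ℕ}

/-- A critical point of a `C¹` convex function is a global minimum. -/
lemma aux_min_of_grad_zero {g : EuclideanSpace ℝ (Fin m) → ℝ}
    (hc : ConvexOn ℝ Set.univ g) {z : EuclideanSpace ℝ (Fin m)}
    (hg : HasGradientAt g 0 z) : IsMinOn g Set.univ z := by
  rw [isMinOn_iff]
  intro y _
  set φ : ℝ → ℝ := fun t => g (t • (y - z) + z) with hφ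
  have hconv : ConvexOn ℝ Set.univ φ := by
    have haff : ConvexOn ℝ ((AffineMap.lineMap z y : ℝ →ᵃ[ℝ] _) ⁻¹' Set.univ)
        (g ∘ (AffineMap.lineMap z y : ℝ →ᵃ[ℝ] _)) := hc.comp_affineMap _
    have h1 : ((AffineMap.lineMap z y : ℝ →ᵃ[ℝ] _) ⁻¹' Set.univ) = Set.univ := by simp
    have h2 : g ∘ (AffineMap.lineMap z y : ℝ →ᵃ[ℝ] _) = φ := by
      funext t
      simp [hφ, AffineMap.lineMap_apply]
    rwa [h1, h2] at haff
  have hderiv : HasDerivAt φ 0 0 := by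
    have h1 : HasDerivAt (fun t : ℝ => t • (y - z) + z) (y - z) 0 := by
      simpa using ((hasDerivAt_id (0:ℝ)).smul_const (y - z)).add_const z
    have h2 : HasFDerivAt g (0 : EuclideanSpace ℝ (Fin m) →L[ℝ] ℝ) z := by
      have := hasGradientAt_iff_hasFDerivAt.mp hg
      simpa using this
    have h3 : HasFDerivAt g (0 : EuclideanSpace ℝ (Fin m) →L[ℝ] ℝ)
        ((0:ℝ) • (y - z) + z) := by simpa using h2
    have := h3.comp_hasDerivAt (0:ℝ) h1
    simp only [ContinuousLinearMap.zero_apply] at this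
    exact this
  have hs := hconv.le_slope_of_hasDerivAt (Set.mem_univ (0:ℝ)) (Set.mem_univ (1:ℝ))
    one_pos hderiv
  rw [slope_def_field] at hs
  have h5 : (0:ℝ) ≤ (φ 1 - φ 0) / (1 - 0) := hs
  have h6 : φ 0 ≤ φ 1 := by
    rw [show (1:ℝ) - 0 = 1 by norm_num, div_one] at h5; linarith
  have e0 : φ 0 = g z := by simp [hφ]
  have e1 : φ 1 = g y := by simp [hφ]
  rw [e0, e1] at h6
  exact h6

lemma aux_grad_zero_of_min {g : EuclideanSpace ℝ (Fin m) → ℝ}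
    {v z : EuclideanSpace ℝ (Fin m)} (hg : HasGradientAt g v z)
    (hmin : IsMinOn g Set.univ z) : v = 0 := by
  have hloc : IsLocalMin g z := hmin.isLocalMin Filter.univ_mem
  have h0 : (InnerProductSpace.toDual ℝ (EuclideanSpace ℝ (Fin m))) v = 0 :=
    hloc.hasFDerivAt_eq_zero (hasGradientAt_iff_hasFDerivAt.mp hg)
  have hinj := (InnerProductSpace.toDual ℝ (EuclideanSpace ℝ (Fin m))).injective
  apply hinj
  simpa using h0

end Aux

/-- **Proposition 1**: if `x ↦ ∑ᵢ Fᵢ(xᵢ)` is coercive then each zero set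
`{z : fᵢ(z) = 0}` is nonempty and bounded, and Assumption A3 holds for every fixed
undirected graph with positive symmetric weights (a graph being encoded by a
symmetric nonnegative weight function `a`, with an edge `{i,j}` iff `0 < a i j`). -/
theorem statement5
    {m N : ℕ} (hm : 0 < m) (hN : 0 < N)
    (f : Fin N → EuclideanSpace ℝ (Fin m) → EuclideanSpace ℝ (Fin m))
    (F : Fin N → EuclideanSpace ℝ (Fin m) → ℝ)
    -- Assumption A1
    (hA1smooth : ∀ i, ContDiff ℝ 1 (F i))
    (hA1convex : ∀ i, ConvexOn ℝ Set.univ (F i))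
    (hA1argmin : ∀ i, ∃ z, IsMinOn (F i) Set.univ z)
    (hA1grad : ∀ i z, HasGradientAt (F i) (-(f i z)) z)
    -- coercivity of x ↦ ∑ᵢ Fᵢ(xᵢ)
    (hcoercive : Tendsto (fun x : Fin N → EuclideanSpace ℝ (Fin m) => ∑ i, F i (x i))
      (Bornology.cobounded (Fin N → EuclideanSpace ℝ (Fin m))) atTop) :
    -- each zero set is nonempty and bounded
    (∀ i, {z | f i z = 0}.Nonempty ∧ Bornology.IsBounded {z | f i z = 0}) ∧
    -- A3.(i)
    (∃ z, IsMinOn (fun z => ∑ i, F i z) Set.univ z) ∧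
    -- A3.(ii) and A3.(iii), for every undirected graph with positive symmetric weights
    (∀ a : Fin N → Fin N → ℝ,
      (∀ i j, a i j = a j i) → (∀ i j, 0 ≤ a i j) → (∀ i, a i i = 0) →
      (∀ K : ℝ, 0 ≤ K → ∃ x, IsMinOn (FG F a K) Set.univ x) ∧
      Bornology.IsBounded
        {x : Fin N → EuclideanSpace ℝ (Fin m) |
          ∃ K : ℝ, 0 ≤ K ∧ IsMinOn (FG F a K) Set.univ x}) := by
  classical
  -- base point: a minimizer of each F j
  choose x₀ hx₀ using hA1argmin
  -- each F i is coercive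
  have hFicoercive : ∀ i, Tendsto (F i) (Bornology.cobounded (EuclideanSpace ℝ (Fin m))) atTop := by
    intro i
    have hupd : Tendsto (fun z : EuclideanSpace ℝ (Fin m) => Function.update x₀ i z)
        (Bornology.cobounded (EuclideanSpace ℝ (Fin m)))
        (Bornology.cobounded (Fin N → EuclideanSpace ℝ (Fin m))) := by
      apply aux_tendsto_cobounded
      intro z
      have := norm_le_pi_norm (Function.update x₀ i z) i
      simpa using this
    have hcomp := hcoercive.comp hupd
    have hcomp2 : Tendsto (fun z : EuclideanSpace ℝ (Fin m) =>
        F i z + ∑ j ∈ Finset.univ.erase i, F j (x₀ j))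
        (Bornology.cobounded (EuclideanSpace ℝ (Fin m))) atTop := by
      apply hcomp.congr
      intro z
      show (∑ j, F j (Function.update x₀ i z j))
        = F i z + ∑ j ∈ Finset.univ.erase i, F j (x₀ j)
      rw [← Finset.add_sum_erase _ (fun j => F j (Function.update x₀ i z j))
        (Finset.mem_univ i)]
      congr 1
      · simp
      · exact Finset.sum_congr rfl fun j hj => by
          rw [Function.update_of_ne (Finset.ne_of_mem_erase hj)]
    have := tendsto_atTop_add_const_right _
      (-(∑ j ∈ Finset.univ.erase i, F j (x₀ j))) hcomp2
    exact this.congr fun z => by ring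
  -- the zero set of f i equals the argmin of F i
  have hzero_iff : ∀ i z, f i z = 0 ↔ IsMinOn (F i) Set.univ z := by
    intro i z
    constructor
    · intro hz
      apply aux_min_of_grad_zero (hA1convex i)
      have := hA1grad i z
      rwa [hz, neg_zero] at this
    · intro hz
      have := aux_grad_zero_of_min (hA1grad i z) hz
      simpa [neg_eq_zero] using this
  refine ⟨?_, ?_, ?_⟩
  · -- zero sets nonempty and bounded
    intro i
    constructor
    · exact ⟨x₀ i, (hzero_iff i (x₀ i)).mpr (hx₀ i)⟩
    · have hsub : {z | f i z = 0} ⊆ {z | F i z ≤ F i (x₀ i)} := by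
        intro z hz
        exact isMinOn_iff.mp ((hzero_iff i z).mp hz) (x₀ i) (Set.mem_univ _)
      exact (aux_sublevel_bounded (hFicoercive i) (F i (x₀ i))).subset hsub
  · -- A3.(i)
    have hdiag : Tendsto (fun z : EuclideanSpace ℝ (Fin m) => (fun _ : Fin N => z))
        (Bornology.cobounded (EuclideanSpace ℝ (Fin m)))
        (Bornology.cobounded (Fin N → EuclideanSpace ℝ (Fin m))) := by
      apply aux_tendsto_cobounded
      intro z
      exact norm_le_pi_norm (fun _ : Fin N => z) ⟨0, hN⟩
    have hsumco : Tendsto (fun z : EuclideanSpace ℝ (Fin m) => ∑ i, F i z)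
        (Bornology.cobounded (EuclideanSpace ℝ (Fin m))) atTop :=
      (hcoercive.comp hdiag).congr fun z => rfl
    have hcont : Continuous (fun z : EuclideanSpace ℝ (Fin m) => ∑ i, F i z) :=
      continuous_finset_sum _ fun i _ => (hA1smooth i).continuous
    obtain ⟨z, hz⟩ := hcont.exists_forall_le
      (by rwa [← Metric.cobounded_eq_cocompact])
    exact ⟨z, isMinOn_iff.mpr fun y _ => hz y⟩
  · -- A3.(ii) and (iii)
    intro a hsymm hnonneg hdiagzero
    have hpen : ∀ (K : ℝ), 0 ≤ K → ∀ x : Fin N → EuclideanSpace ℝ (Fin m),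
        0 ≤ (K / 2) * ((∑ i, ∑ j, a i j * ‖x j - x i‖ ^ 2) / 2) := by
      intro K hK x
      apply mul_nonneg (by linarith)
      apply div_nonneg _ (by norm_num)
      apply Finset.sum_nonneg; intro i _
      apply Finset.sum_nonneg; intro j _
      exact mul_nonneg (hnonneg i j) (by positivity)
    have hFGge : ∀ (K : ℝ), 0 ≤ K → ∀ x : Fin N → EuclideanSpace ℝ (Fin m),
        (∑ i, F i (x i)) ≤ FG F a K x := by
      intro K hK x
      have := hpen K hK x
      unfold FG; linarith
    have hFGcoercive : ∀ (K : ℝ), 0 ≤ K →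
        Tendsto (FG F a K) (Bornology.cobounded (Fin N → EuclideanSpace ℝ (Fin m))) atTop := by
      intro K hK
      exact tendsto_atTop_mono (hFGge K hK) hcoercive
    have hFGcont : ∀ K : ℝ, Continuous (FG F a K) := by
      intro K
      unfold FG
      apply Continuous.add
      · exact continuous_finset_sum _ fun i _ =>
          (hA1smooth i).continuous.comp (continuous_apply i)
      · apply continuous_const.mul
        apply Continuous.div_const
        apply continuous_finset_sum; intro i _
        apply continuous_finset_sum; intro j _
        apply continuous_const.mul
        exact (((continuous_apply j).sub (continuous_apply i)).norm).pow 2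
    constructor
    · intro K hK
      obtain ⟨x, hx⟩ := (hFGcont K).exists_forall_le
        (by rw [← Metric.cobounded_eq_cocompact]; exact hFGcoercive K hK)
      exact ⟨x, isMinOn_iff.mpr fun y _ => hx y⟩
    · -- A3.(iii)
      have hsub : {x : Fin N → EuclideanSpace ℝ (Fin m) |
            ∃ K : ℝ, 0 ≤ K ∧ IsMinOn (FG F a K) Set.univ x}
          ⊆ {x : Fin N → EuclideanSpace ℝ (Fin m) |
            (∑ i, F i (x i)) ≤ ∑ i, F i 0} := by
        rintro x ⟨K, hK, hmin⟩
        have h1 : FG F a K x ≤ FG F a K (fun _ => 0) :=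
          isMinOn_iff.mp hmin _ (Set.mem_univ _)
        have h2 : FG F a K (fun _ => 0) = ∑ i, F i 0 := by
          unfold FG
          simp
        have h3 := hFGge K hK x
        simp only [Set.mem_setOf_eq]
        rw [h2] at h1
        linarith
      exact (aux_sublevel_bounded hcoercive (∑ i, F i 0)).subset hsub
end

section
/- Suppose Assumption A1 holds with scalar node states, i.e., m = 1, and each set {z ∈ ℝ : f_i(z) = 0} is nonempty and bounded. Then Assumption A2 holds, and Assumption A3 holds for every fixed undirected connected graph G with positive symmetric weights. -/
open Filter

private lemma aux_anti {F₀ f₀ : ℝ → ℝ} (hconv : ConvexOn ℝ Set.univ F₀)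
    (h : ∀ z, HasDerivAt F₀ (-(f₀ z)) z) : Antitone f₀ := by
  have hmono : MonotoneOn (deriv F₀) Set.univ :=
    hconv.monotoneOn_deriv (fun x _ => (h x).differentiableAt)
  intro x y hxy
  have := hmono (Set.mem_univ x) (Set.mem_univ y) hxy
  rw [(h x).deriv, (h y).deriv] at this
  linarith

private lemma aux_one {F₀ f₀ : ℝ → ℝ}
    (hsmooth : ContDiff ℝ 1 F₀) (hconv : ConvexOn ℝ Set.univ F₀)
    (h : ∀ z, HasDerivAt F₀ (-(f₀ z)) z)
    (hne : {z | f₀ z = 0}.Nonempty) (hbdd : Bornology.IsBounded {z | f₀ z = 0}) :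
    ∃ α β : ℝ, f₀ α = 0 ∧ f₀ β = 0 ∧ α ≤ β ∧
      (∀ z, f₀ z = 0 → α ≤ z ∧ z ≤ β) ∧
      (∀ z, β ≤ z → f₀ z ≤ 0) ∧ (∀ z, z ≤ α → 0 ≤ f₀ z) ∧
      (∀ z, β < z → f₀ z < 0) ∧ (∀ z, z < α → 0 < f₀ z) := by
  have hanti : Antitone f₀ := aux_anti hconv h
  have hfeq : f₀ = fun z => -(deriv F₀ z) := funext fun z => by rw [(h z).deriv]; ring
  have hcont : Continuous f₀ := by
    rw [hfeq]; exact (hsmooth.continuous_deriv le_rfl).neg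
  have hZc : IsClosed {z | f₀ z = 0} := isClosed_eq hcont continuous_const
  have hZcomp : IsCompact {z | f₀ z = 0} :=
    Metric.isCompact_of_isClosed_isBounded hZc hbdd
  refine ⟨sInf {z | f₀ z = 0}, sSup {z | f₀ z = 0}, ?_, ?_, ?_, ?_, ?_, ?_, ?_, ?_⟩
  · exact hZcomp.sInf_mem hne
  · exact hZcomp.sSup_mem hne
  · exact csInf_le_csSup hne hbdd.bddBelow hbdd.bddAbove
  · exact fun z hz => ⟨csInf_le hbdd.bddBelow hz, le_csSup hbdd.bddAbove hz⟩
  · intro z hz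
    have := hanti hz
    rw [hZcomp.sSup_mem hne] at this
    exact this
  · intro z hz
    have := hanti hz
    rw [hZcomp.sInf_mem hne] at this
    exact this
  · intro z hz
    have h1 : f₀ z ≤ 0 := by
      have := hanti hz.le
      rw [hZcomp.sSup_mem hne] at this
      exact this
    rcases lt_or_eq_of_le h1 with h2 | h2
    · exact h2
    · exact absurd (le_csSup hbdd.bddAbove (show z ∈ {z | f₀ z = 0} from h2)) (not_le.2 hz)
  · intro z hz
    have h1 : 0 ≤ f₀ z := by
      have := hanti hz.le
      rw [hZcomp.sInf_mem hne] at this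
      exact this
    rcases lt_or_eq_of_le h1 with h2 | h2
    · exact h2
    · exact absurd (csInf_le hbdd.bddBelow (show z ∈ {z | f₀ z = 0} from h2.symm)) (not_le.2 hz)

/-- **Proposition 2**: for scalar node states (`m = 1`), if each zero set
`{z ∈ ℝ : fᵢ(z) = 0}` is nonempty and bounded, then Assumption A2 holds, and
Assumption A3 holds for every fixed undirected connected graph with positive
symmetric weights (a graph being encoded by a symmetric nonnegative weight
function `a`, with an edge `{i,j}` iff `0 < a i j`). -/
theorem statement6
    {N : ℕ} (hN : 0 < N)
    (f : Fin N → ℝ → ℝ) (F : Fin N → ℝ → ℝ)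
    -- Assumption A1 with m = 1
    (hA1smooth : ∀ i, ContDiff ℝ 1 (F i))
    (hA1convex : ∀ i, ConvexOn ℝ Set.univ (F i))
    (hA1argmin : ∀ i, ∃ z, IsMinOn (F i) Set.univ z)
    (hA1grad : ∀ i z, HasDerivAt (F i) (-(f i z)) z)
    -- each zero set is nonempty and bounded
    (hne : ∀ i, {z | f i z = 0}.Nonempty)
    (hbdd : ∀ i, Bornology.IsBounded {z | f i z = 0}) :
    -- Assumption A2 holds: the projection inequality
    (∀ (i : Fin N) (z p : ℝ),
      p ∈ closure (convexHull ℝ (⋃ k, {w | f k w = 0})) →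
      dist z p = Metric.infDist z (closure (convexHull ℝ (⋃ k, {w | f k w = 0}))) →
      (z - p) * f i z ≤ 0) ∧
    -- A3.(i)
    (∃ z, IsMinOn (fun z => ∑ i, F i z) Set.univ z) ∧
    -- A3.(ii) and A3.(iii), for every undirected connected graph with positive
    -- symmetric weights
    (∀ a : Fin N → Fin N → ℝ,
      (∀ i j, a i j = a j i) → (∀ i j, 0 ≤ a i j) → (∀ i, a i i = 0) →
      (∀ i j : Fin N, Relation.ReflTransGen (fun p q => 0 < a p q) i j) →
      (∀ K : ℝ, 0 ≤ K → ∃ x, IsMinOn (FG F a K) Set.univ x) ∧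
      Bornology.IsBounded
        {x : Fin N → ℝ | ∃ K : ℝ, 0 ≤ K ∧ IsMinOn (FG F a K) Set.univ x}) := by
  classical
  have hNE : Nonempty (Fin N) := ⟨⟨0, hN⟩⟩
  choose α β hα hβ hαβ hmem hr hl hrs hls using
    fun i => aux_one (hA1smooth i) (hA1convex i) (hA1grad i) (hne i) (hbdd i)
  set m : ℝ := Finset.univ.inf' Finset.univ_nonempty α with hmdef
  set M : ℝ := Finset.univ.sup' Finset.univ_nonempty β with hMdef
  have hmle : ∀ i, m ≤ α i := fun i => Finset.inf'_le _ (Finset.mem_univ i)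
  have hMle : ∀ i, β i ≤ M := fun i => Finset.le_sup' _ (Finset.mem_univ i)
  have hmM : m ≤ M := by
    obtain i0 := Classical.arbitrary (Fin N)
    exact le_trans (hmle i0) (le_trans (hαβ i0) (hMle i0))
  -- zero sets lie in [m, M]
  have hZsub : ∀ i z, f i z = 0 → z ∈ Set.Icc m M := fun i z hz =>
    ⟨le_trans (hmle i) (hmem i z hz).1, le_trans (hmem i z hz).2 (hMle i)⟩
  -- sign facts
  have hfle : ∀ i z, M ≤ z → f i z ≤ 0 := fun i z hz => hr i z (le_trans (hMle i) hz)
  have hfge : ∀ i z, z ≤ m → 0 ≤ f i z := fun i z hz => hl i z (le_trans hz (hmle i))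
  have hflt : ∀ i z, M < z → f i z < 0 := fun i z hz => hrs i z (lt_of_le_of_lt (hMle i) hz)
  have hfgt : ∀ i z, z < m → 0 < f i z := fun i z hz => hls i z (lt_of_lt_of_le hz (hmle i))
  -- the closed convex hull is [m, M]
  have hΘ : closure (convexHull ℝ (⋃ k, {w | f k w = 0})) = Set.Icc m M := by
    apply Set.Subset.antisymm
    · apply closure_minimal _ isClosed_Icc
      apply convexHull_min _ (convex_Icc m M)
      intro z hz
      obtain ⟨k, hk⟩ := Set.mem_iUnion.1 hz
      exact hZsub k z hk
    · have hconv : Convex ℝ (closure (convexHull ℝ (⋃ k, {w | f k w = 0}))) :=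
        (convex_convexHull ℝ _).closure
      obtain ⟨im, _, him⟩ := Finset.exists_mem_eq_inf' Finset.univ_nonempty α
      obtain ⟨iM, _, hiM⟩ := Finset.exists_mem_eq_sup' Finset.univ_nonempty β
      have hmmem : m ∈ closure (convexHull ℝ (⋃ k, {w | f k w = 0})) :=
        subset_closure (subset_convexHull ℝ _ (Set.mem_iUnion.2 ⟨im, show f im m = 0 by rw [hmdef, him]; exact hα im⟩))
      have hMmem : M ∈ closure (convexHull ℝ (⋃ k, {w | f k w = 0})) :=
        subset_closure (subset_convexHull ℝ _ (Set.mem_iUnion.2 ⟨iM, show f iM M = 0 by rw [hMdef, hiM]; exact hβ iM⟩))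
      exact hconv.ordConnected.out hmmem hMmem
  -- strict monotonicity of F i outside [m, M]
  have hFmono : ∀ i, StrictMonoOn (F i) (Set.Ici M) := fun i =>
    strictMonoOn_of_deriv_pos (convex_Ici M) (hA1smooth i).continuous.continuousOn
      (fun x hx => by
        rw [interior_Ici] at hx
        rw [(hA1grad i x).deriv]
        have := hflt i x hx
        linarith)
  have hFanti : ∀ i, StrictAntiOn (F i) (Set.Iic m) := fun i =>
    strictAntiOn_of_deriv_neg (convex_Iic m) (hA1smooth i).continuous.continuousOn
      (fun x hx => by
        rw [interior_Iic] at hx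
        rw [(hA1grad i x).deriv]
        have := hfgt i x hx
        linarith)
  -- the clamp function
  set c : ℝ → ℝ := fun z => max m (min z M) with hcdef
  have hcIcc : ∀ z, c z ∈ Set.Icc m M := fun z =>
    ⟨le_max_left _ _, max_le hmM (min_le_right _ _)⟩
  have hceq : ∀ z, z ∈ Set.Icc m M → c z = z := fun z hz => by
    simp only [hcdef, min_eq_left hz.2, max_eq_right hz.1]
  have hclt : ∀ i z, z ∉ Set.Icc m M → F i (c z) < F i z := by
    intro i z hz
    rcases not_and_or.1 (Set.mem_Icc.not.1 hz) with h | h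
    · push_neg at h
      have hcz : c z = m := by
        simp only [hcdef, min_eq_left (le_trans h.le hmM), max_eq_left h.le]
      rw [hcz]
      exact hFanti i h.le (le_refl m) h
    · push_neg at h
      have hcz : c z = M := by
        simp only [hcdef, min_eq_right h.le, max_eq_right hmM]
      rw [hcz]
      exact hFmono i (le_refl M) h.le h
  have hcle : ∀ i z, F i (c z) ≤ F i z := by
    intro i z
    by_cases hz : z ∈ Set.Icc m M
    · rw [hceq z hz]
    · exact (hclt i z hz).le
  have hclip : ∀ z w, |c z - c w| ≤ |z - w| := by
    intro z w
    calc |max m (min z M) - max m (min w M)|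
        = |max (min z M) m - max (min w M) m| := by rw [max_comm m, max_comm m]
      _ ≤ |min z M - min w M| := abs_max_sub_max_le_abs _ _ _
      _ ≤ max |z - w| |M - M| := abs_min_sub_min_le_max _ _ _ _
      _ = |z - w| := by simp
  refine ⟨?_, ?_, ?_⟩
  · -- A2
    intro i z p hp hd
    rw [hΘ] at hp hd
    by_cases hz : z ∈ Set.Icc m M
    · rw [Metric.infDist_zero_of_mem hz] at hd
      have : z = p := dist_eq_zero.1 hd
      rw [this, sub_self, zero_mul]
    · rcases not_and_or.1 (Set.mem_Icc.not.1 hz) with h | h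
      · push_neg at h
        have h1 : z - p ≤ 0 := by have := hp.1; linarith
        have h2 : 0 ≤ f i z := hfge i z h.le
        exact mul_nonpos_of_nonpos_of_nonneg h1 h2
      · push_neg at h
        have h1 : 0 ≤ z - p := by have := hp.2; linarith
        have h2 : f i z ≤ 0 := hfle i z h.le
        exact mul_nonpos_of_nonneg_of_nonpos h1 h2
  · -- A3.(i)
    have hGcont : Continuous (fun z => ∑ i, F i z) :=
      continuous_finset_sum _ fun i _ => (hA1smooth i).continuous
    obtain ⟨z0, hz0mem, hz0⟩ := isCompact_Icc.exists_isMinOn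
      (Set.nonempty_Icc.2 hmM) hGcont.continuousOn
    refine ⟨z0, isMinOn_iff.2 fun y _ => ?_⟩
    calc ∑ i, F i z0 ≤ ∑ i, F i (c y) := isMinOn_iff.1 hz0 (c y) (hcIcc y)
      _ ≤ ∑ i, F i y := Finset.sum_le_sum fun i _ => hcle i y
  · -- A3.(ii) and (iii)
    intro a hsym hnn hdiag hconn
    have cubene : (Set.Icc (fun _ : Fin N => m) (fun _ => M)).Nonempty :=
      Set.nonempty_Icc.2 (fun _ => hmM)
    have hFGcont : ∀ K : ℝ, Continuous (FG F a K) := by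
      intro K
      unfold FG
      apply Continuous.add
      · exact continuous_finset_sum _ fun i _ =>
          (hA1smooth i).continuous.comp (continuous_apply i)
      · apply Continuous.mul continuous_const
        apply Continuous.div_const
        exact continuous_finset_sum _ fun i _ => continuous_finset_sum _ fun j _ =>
          continuous_const.mul
            ((((continuous_apply j).sub (continuous_apply i)).norm).pow 2)
    have hquad : ∀ x : Fin N → ℝ,
        (∑ i, ∑ j, a i j * ‖c (x j) - c (x i)‖ ^ 2) ≤
          ∑ i, ∑ j, a i j * ‖x j - x i‖ ^ 2 := by
      intro x
      refine Finset.sum_le_sum fun i _ => Finset.sum_le_sum fun j _ => ?_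
      apply mul_le_mul_of_nonneg_left _ (hnn i j)
      rw [Real.norm_eq_abs, Real.norm_eq_abs]
      exact pow_le_pow_left₀ (abs_nonneg _) (hclip (x j) (x i)) 2
    have hFGle : ∀ K : ℝ, 0 ≤ K → ∀ x : Fin N → ℝ,
        FG F a K (fun i => c (x i)) ≤ FG F a K x := by
      intro K hK x
      have h1 : ∑ i, F i (c (x i)) ≤ ∑ i, F i (x i) :=
        Finset.sum_le_sum fun i _ => hcle i (x i)
      have h2 := hquad x
      have hK2 : (0:ℝ) ≤ K / 2 := by linarith
      have h3 := mul_le_mul_of_nonneg_left (by linarith :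
        (∑ i, ∑ j, a i j * ‖c (x j) - c (x i)‖ ^ 2) / 2 ≤
          (∑ i, ∑ j, a i j * ‖x j - x i‖ ^ 2) / 2) hK2
      exact add_le_add h1 h3
    have hFGlt : ∀ K : ℝ, 0 ≤ K → ∀ x : Fin N → ℝ, (∃ i, x i ∉ Set.Icc m M) →
        FG F a K (fun i => c (x i)) < FG F a K x := by
      rintro K hK x ⟨i0, hi0⟩
      have h1 : ∑ i, F i (c (x i)) < ∑ i, F i (x i) :=
        Finset.sum_lt_sum (fun i _ => hcle i (x i))
          ⟨i0, Finset.mem_univ i0, hclt i0 (x i0) hi0⟩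
      have h2 := hquad x
      have hK2 : (0:ℝ) ≤ K / 2 := by linarith
      have h3 := mul_le_mul_of_nonneg_left (by linarith :
        (∑ i, ∑ j, a i j * ‖c (x j) - c (x i)‖ ^ 2) / 2 ≤
          (∑ i, ∑ j, a i j * ‖x j - x i‖ ^ 2) / 2) hK2
      exact add_lt_add_of_lt_of_le h1 h3
    constructor
    · intro K hK
      obtain ⟨x0, hx0mem, hx0⟩ := isCompact_Icc.exists_isMinOn cubene
        (hFGcont K).continuousOn
      refine ⟨x0, isMinOn_iff.2 fun y _ => ?_⟩
      have hcy : (fun i => c (y i)) ∈ Set.Icc (fun _ : Fin N => m) (fun _ => M) :=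
        ⟨fun i => (hcIcc (y i)).1, fun i => (hcIcc (y i)).2⟩
      exact le_trans (isMinOn_iff.1 hx0 _ hcy) (hFGle K hK y)
    · apply Bornology.IsBounded.subset
        (isCompact_Icc (a := fun _ : Fin N => m) (b := fun _ => M)).isBounded
      rintro x ⟨K, hK, hmin⟩
      by_contra hx
      have hex : ∃ i, x i ∉ Set.Icc m M := by
        by_contra hh
        push_neg at hh
        exact hx ⟨fun i => (hh i).1, fun i => (hh i).2⟩
      exact absurd (isMinOn_iff.1 hmin _ (Set.mem_univ _))
        (not_le.2 (hFGlt K hK x hex))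
end

section
/- Suppose Assumptions A1 and A2 hold. Then along every solution x(t) of the network system, the function θ(x(t)) := max_{i=1,…,N} dist(x_i(t), Θ*)² is non-increasing in t, where dist(·, Θ*) denotes Euclidean distance to the set Θ*. -/
open Filter Metric Set


/-- projection onto nonempty closed convex set in a real Hilbert space -/
lemma aux_proj {E : Type*} [NormedAddCommGroup E] [InnerProductSpace ℝ E] [CompleteSpace E]
    {C : Set E} (hne : C.Nonempty) (hcl : IsClosed C) (hconv : Convex ℝ C) (u : E) :
    ∃ p ∈ C, dist u p = Metric.infDist u C ∧ ∀ w ∈ C, (inner ℝ (u - p) (w - p) : ℝ) ≤ 0 := by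
  obtain ⟨p, hpC, hp⟩ := exists_norm_eq_iInf_of_complete_convex hne hcl.isComplete hconv u
  have hinf : Metric.infDist u C = ⨅ w : C, ‖u - w‖ := by
    rw [Metric.infDist_eq_iInf]
    congr 1; ext w; exact dist_eq_norm _ _
  exact ⟨p, hpC, by rw [dist_eq_norm, hp, hinf],
    (norm_eq_iInf_iff_real_inner_le_zero hconv hpC).1 hp⟩

lemma aux_contOn_sup' {ι : Type*} {X : Type*} [TopologicalSpace X] {s : Set X}
    (t : Finset ι) (ht : t.Nonempty) (h : ι → X → ℝ)
    (hc : ∀ i, ContinuousOn (h i) s) :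
    ContinuousOn (fun z => t.sup' ht fun i => h i z) s := by
  induction ht using Finset.Nonempty.cons_induction with
  | singleton i => simpa using hc i
  | cons a t hat hts ih =>
      have heq : (fun z => (Finset.cons a t hat).sup' (Finset.cons_nonempty hat) fun i => h i z)
          = fun z => (h a z) ⊔ (t.sup' hts fun i => h i z) := by
        funext z; rw [Finset.sup'_cons]
      rw [heq]
      exact (hc a).sup ih

lemma aux_contOn_iSup {ι : Type*} [Fintype ι] [Nonempty ι] {X : Type*} [TopologicalSpace X]
    {s : Set X} {h : ι → X → ℝ} (hc : ∀ i, ContinuousOn (h i) s) :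
    ContinuousOn (fun z => ⨆ i, h i z) s := by
  have : (fun z => ⨆ i, h i z)
      = fun z => Finset.univ.sup' Finset.univ_nonempty fun i => h i z := by
    funext z; rw [Finset.sup'_univ_eq_ciSup]
  rw [this]
  exact aux_contOn_sup' _ _ _ hc

/-- **Lemma 6**: under Assumptions A1 and A2, along every solution of the switching
network system the function `θ(x(t)) = maxᵢ dist(xᵢ(t), Θ*)²` is non-increasing,
where `Θ* = co(⋃ᵢ {z : fᵢ(z) = 0})`. -/
theorem statement7
    {m N : ℕ} (hm : 0 < m) (hN : 0 < N)
    (f : Fin N → EuclideanSpace ℝ (Fin m) → EuclideanSpace ℝ (Fin m))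
    (F : Fin N → EuclideanSpace ℝ (Fin m) → ℝ)
    -- Assumption A1
    (hA1smooth : ∀ i, ContDiff ℝ 1 (F i))
    (hA1convex : ∀ i, ConvexOn ℝ Set.univ (F i))
    (hA1argmin : ∀ i, ∃ z, IsMinOn (F i) Set.univ z)
    (hA1grad : ∀ i z, HasGradientAt (F i) (-(f i z)) z)
    -- Assumption A2
    (hA2ne : ∀ i, {z | f i z = 0}.Nonempty)
    (hA2bdd : ∀ i, Bornology.IsBounded {z | f i z = 0})
    (hA2proj : ∀ (i : Fin N) (z p : EuclideanSpace ℝ (Fin m)),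
      p ∈ closure (convexHull ℝ (⋃ k, {w | f k w = 0})) →
      dist z p = Metric.infDist z (closure (convexHull ℝ (⋃ k, {w | f k w = 0}))) →
      (inner ℝ (z - p) (f i z) : ℝ) ≤ 0)
    -- coupling gain
    (K : ℝ) (hK : 0 ≤ K)
    -- switching weighted adjacency with weights in [a_*, a^*] on existing arcs
    (A : ℝ → Fin N → Fin N → ℝ)
    (aL aU : ℝ) (haL : 0 < aL)
    (hbounds : ∀ t i j, A t i j = 0 ∨ (aL ≤ A t i j ∧ A t i j ≤ aU))
    -- piecewise constant with dwell time τ between consecutive switches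
    (τ : ℝ) (hτ : 0 < τ)
    (hpc : ∀ t : ℝ, 0 ≤ t → ∃ t₀, t₀ ≤ t ∧ t < t₀ + τ ∧
        ∀ s, t₀ ≤ s → s < t₀ + τ → A s = A t₀)
    -- a solution of the network system
    (x : ℝ → Fin N → EuclideanSpace ℝ (Fin m))
    (hx : ∀ i, ∀ t : ℝ, 0 ≤ t → HasDerivWithinAt (fun s => x s i)
        (f i (x t i) + K • ∑ j, A t i j • (x t j - x t i)) (Set.Ici 0) t) :
    AntitoneOn
      (fun t => ⨆ i, Metric.infDist (x t i) (convexHull ℝ (⋃ k, {w | f k w = 0})) ^ 2)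
      (Set.Ici (0 : ℝ)) := by
  have : Nonempty (Fin N) := ⟨⟨0, hN⟩⟩
  set Sx : Set (EuclideanSpace ℝ (Fin m)) := convexHull ℝ (⋃ k, {w | f k w = 0}) with hSxdef
  set C : Set (EuclideanSpace ℝ (Fin m)) := closure Sx with hCdef
  have hCne : C.Nonempty := by
    obtain ⟨z, hz⟩ := hA2ne ⟨0, hN⟩
    exact ⟨z, subset_closure (subset_convexHull ℝ _ (Set.mem_iUnion.2 ⟨⟨0, hN⟩, hz⟩))⟩
  have hCcl : IsClosed C := isClosed_closure
  have hCconv : Convex ℝ C := (convex_convexHull ℝ _).closure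
  set g : ℝ → ℝ := fun t => ⨆ i, infDist (x t i) Sx ^ 2 with hgdef
  have hxc : ∀ i, ContinuousOn (fun s => x s i) (Ici 0) :=
    fun i t ht => (hx i t ht).continuousWithinAt
  have hhc : ∀ i, ContinuousOn (fun t => infDist (x t i) Sx ^ 2) (Ici 0) :=
    fun i => ((continuous_infDist_pt Sx).comp_continuousOn (hxc i)).pow 2
  have hgc : ContinuousOn g (Ici 0) := aux_contOn_iSup hhc
  have hbdd : ∀ t : ℝ, BddAbove (Set.range fun i => infDist (x t i) Sx ^ 2) :=
    fun t => (Set.finite_range _).bddAbove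
  intro a ha b hb hab
  have ha0 : (0:ℝ) ≤ a := ha
  -- the main fencing bound
  have bound : ∀ t ∈ Ico a b, ∀ r, (0:ℝ) < r → ∃ᶠ z in nhdsWithin t (Ioi t), slope g t z < r := by
    intro t ht r hr
    have ht0 : (0:ℝ) ≤ t := le_trans ha0 ht.1
    have hIoi : Ioi t ⊆ Ici (0:ℝ) := fun z hz => le_of_lt (lt_of_le_of_lt ht0 hz)
    -- projections at time t
    choose p hpC hpdist hpproj using fun i => aux_proj hCne hCcl hCconv (x t i)
    have hdist_eq : ∀ z i, infDist (x z i) Sx = infDist (x z i) C := by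
      intro z i; rw [hCdef, infDist_closure]
    have hle_g : ∀ j, infDist (x t j) Sx ^ 2 ≤ g t := fun j => le_ciSup (hbdd t) j
    have key : ∀ i, ∀ᶠ z in nhdsWithin t (Ioi t),
        infDist (x z i) Sx ^ 2 ≤ g t + (r/2) * (z - t) := by
      intro i
      rcases lt_or_eq_of_le (hle_g i) with hlt | heq
      · -- inactive index
        have hcont : ContinuousWithinAt (fun z => infDist (x z i) Sx ^ 2) (Ici 0) t :=
          hhc i t ht0
        have hev : ∀ᶠ z in nhdsWithin t (Ici 0), infDist (x z i) Sx ^ 2 < g t :=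
          hcont.eventually_lt_const hlt
        have hev' : ∀ᶠ z in nhdsWithin t (Ioi t), infDist (x z i) Sx ^ 2 < g t :=
          (nhdsWithin_mono t hIoi) hev
        filter_upwards [hev', self_mem_nhdsWithin] with z h1 h2
        have : (0:ℝ) ≤ (r/2) * (z - t) := by
          have : (0:ℝ) < z - t := sub_pos.2 h2
          positivity
        linarith
      · -- active index
        set u : EuclideanSpace ℝ (Fin m) := x t i - p i with hu
        set v : EuclideanSpace ℝ (Fin m) :=
          f i (x t i) + K • ∑ j, A t i j • (x t j - x t i) with hv
        have hnu : ‖u‖ = infDist (x t i) C := by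
          rw [hu, ← dist_eq_norm, hpdist i]
        have hdle : ∀ j, infDist (x t j) C ≤ infDist (x t i) C := by
          intro j
          have h1 : infDist (x t j) Sx ^ 2 ≤ infDist (x t i) Sx ^ 2 := heq ▸ hle_g j
          rw [hdist_eq t j, hdist_eq t i] at h1
          exact (pow_le_pow_iff_left₀ infDist_nonneg infDist_nonneg two_ne_zero).1 h1
        -- inner product bound
        have hinner : (inner ℝ u v : ℝ) ≤ 0 := by
          rw [hv, inner_add_right]
          have hT1 : (inner ℝ u (f i (x t i)) : ℝ) ≤ 0 := by
            refine hA2proj i (x t i) (p i) (hpC i) ?_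
            exact hpdist i
          have hT2 : (inner ℝ u (K • ∑ j, A t i j • (x t j - x t i)) : ℝ) ≤ 0 := by
            rw [real_inner_smul_right]
            have hsum : (inner ℝ u (∑ j, A t i j • (x t j - x t i)) : ℝ) ≤ 0 := by
              rw [inner_sum]
              refine Finset.sum_nonpos fun j _ => ?_
              rw [real_inner_smul_right]
              have hAnn : 0 ≤ A t i j := by
                rcases hbounds t i j with h | h
                · rw [h]
                · linarith [h.1]
              have hterm : (inner ℝ u (x t j - x t i) : ℝ) ≤ 0 := by
                have hdecomp : x t j - x t i = (x t j - p j) + (p j - p i) + (p i - x t i) := by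
                  abel
                rw [hdecomp, inner_add_right, inner_add_right]
                have hA : (inner ℝ u (x t j - p j) : ℝ)
                    ≤ infDist (x t i) C * infDist (x t j) C := by
                  calc (inner ℝ u (x t j - p j) : ℝ) ≤ ‖u‖ * ‖x t j - p j‖ :=
                        real_inner_le_norm _ _
                    _ = infDist (x t i) C * infDist (x t j) C := by
                        rw [hnu, ← dist_eq_norm, hpdist j]
                have hB : (inner ℝ u (p j - p i) : ℝ) ≤ 0 := hpproj i (p j) (hpC j)
                have hC2 : (inner ℝ u (p i - x t i) : ℝ) = -(‖u‖ ^ 2) := by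
                  have : p i - x t i = -u := by rw [hu]; abel
                  rw [this, inner_neg_right, real_inner_self_eq_norm_sq]
                have hdi : 0 ≤ infDist (x t i) C := infDist_nonneg
                have hdj := hdle j
                rw [hC2, hnu]
                nlinarith
              exact mul_nonpos_of_nonneg_of_nonpos hAnn hterm
            exact mul_nonpos_of_nonneg_of_nonpos hK hsum
          linarith
        -- derivative of the comparison function
        have hder : HasDerivWithinAt (fun z => (inner ℝ (x z i - p i) (x z i - p i) : ℝ))
            ((inner ℝ u v : ℝ) + (inner ℝ v u : ℝ)) (Ici 0) t :=
          HasDerivWithinAt.inner ℝ ((hx i t ht0).sub_const (p i))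
            ((hx i t ht0).sub_const (p i))
        have hc0 : (inner ℝ u v : ℝ) + (inner ℝ v u : ℝ) ≤ 0 := by
          have hcomm : (inner ℝ v u : ℝ) = inner ℝ u v := real_inner_comm u v
          linarith
        have hslope : Filter.Tendsto (slope (fun z => (inner ℝ (x z i - p i) (x z i - p i) : ℝ)) t)
            (nhdsWithin t (Ioi t)) (nhds ((inner ℝ u v : ℝ) + (inner ℝ v u : ℝ))) := by
          have h1 := hasDerivWithinAt_iff_tendsto_slope.1 hder
          refine h1.mono_left (nhdsWithin_mono t ?_)
          intro z hz
          exact ⟨hIoi hz, ne_of_gt hz⟩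
        have hev : ∀ᶠ z in nhdsWithin t (Ioi t),
            slope (fun z => (inner ℝ (x z i - p i) (x z i - p i) : ℝ)) t z < r/2 :=
          hslope.eventually_lt_const (by linarith)
        filter_upwards [hev, self_mem_nhdsWithin] with z h1 h2
        have hz : (0:ℝ) < z - t := sub_pos.2 h2
        rw [slope_def_field, div_lt_iff₀ hz] at h1
        have hφt : (inner ℝ (x t i - p i) (x t i - p i) : ℝ) = g t := by
          rw [real_inner_self_eq_norm_sq, ← hu, hnu, ← hdist_eq t i, heq]
        have hφz : infDist (x z i) Sx ^ 2 ≤ (inner ℝ (x z i - p i) (x z i - p i) : ℝ) := by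
          rw [real_inner_self_eq_norm_sq, ← dist_eq_norm]
          have h3 : infDist (x z i) Sx ≤ dist (x z i) (p i) := by
            rw [hdist_eq z i]
            exact infDist_le_dist_of_mem (hpC i)
          exact pow_le_pow_left₀ infDist_nonneg h3 2
        have := h1
        rw [hφt] at this
        nlinarith
    have hall : ∀ᶠ z in nhdsWithin t (Ioi t),
        ∀ i, infDist (x z i) Sx ^ 2 ≤ g t + (r/2) * (z - t) :=
      Filter.eventually_all.2 key
    refine Filter.Eventually.frequently ?_
    filter_upwards [hall, self_mem_nhdsWithin] with z h1 h2
    have hz : (0:ℝ) < z - t := sub_pos.2 h2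
    have hgz : g z ≤ g t + (r/2) * (z - t) := ciSup_le h1
    rw [slope_def_field, div_lt_iff₀ hz]
    nlinarith
  have := image_le_of_liminf_slope_right_le_deriv_boundary
    (f := g) (a := a) (b := b) (B := fun _ => g a) (B' := fun _ => 0)
    (hgc.mono fun z hz => le_trans ha0 hz.1) le_rfl continuousOn_const
    (fun z _ => hasDerivWithinAt_const z _ (g a)) bound
  exact this ⟨hab, le_rfl⟩
end

section
/- Suppose Assumption A1 holds, ∩_{i=1}^N {z ∈ ℝ^m : f_i(z) = 0} is nonempty, and the graph G is fixed, undirected, and connected with positive symmetric weights a_{ij} = a_{ji} > 0. Then for every K > 0, the set of global minimizers of F_G(·; K) equals the set of points (x_1,…,x_N) ∈ ℝ^{mN} with x_1 = ⋯ = x_N and x_1 ∈ ∩_{i=1}^N {z : f_i(z) = 0}; that is, argmin F_G(·; K) = (∩_{i=1}^N {z : f_i(z) = 0})^N ∩ M, where M := {(x_1,…,x_N) ∈ ℝ^{mN} : x_1 = ⋯ = x_N} is the consensus manifold. -/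
open Filter

/-- A convex C¹ function with zero gradient at a point attains its minimum there. -/
lemma min_of_grad_zero {E : Type*} [NormedAddCommGroup E] [InnerProductSpace ℝ E]
    [CompleteSpace E]
    (F : E → ℝ) (hc : ConvexOn ℝ Set.univ F) {z : E}
    (h : HasGradientAt F 0 z) (y : E) : F z ≤ F y := by
  set g : ℝ → ℝ := fun t => F (t • (y - z) + z) with hg
  have hgc : ConvexOn ℝ Set.univ g := by
    have := hc.comp_affineMap (AffineMap.lineMap z y : ℝ →ᵃ[ℝ] E)
    simp only [Set.preimage_univ] at this
    have heq : g = F ∘ (AffineMap.lineMap z y : ℝ →ᵃ[ℝ] E) := by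
      funext t
      simp [g, AffineMap.lineMap_apply_module', Function.comp]
    rw [heq]
    exact this
  have hfd : HasFDerivAt F (0 : E →L[ℝ] ℝ) z := by
    have := (hasGradientAt_iff_hasFDerivAt).mp h
    simpa using this
  have hcurve : HasDerivAt (fun t : ℝ => t • (y - z) + z) (y - z) 0 := by
    simpa using ((hasDerivAt_id (0:ℝ)).smul_const (y - z)).add_const z
  have hderiv : HasDerivAt g 0 0 := by
    have := HasFDerivAt.comp_hasDerivAt 0
      (by simpa using hfd : HasFDerivAt F (0 : E →L[ℝ] ℝ) ((0:ℝ) • (y - z) + z)) hcurve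
    have h2 : HasDerivAt g ((0 : E →L[ℝ] ℝ) (y - z)) 0 := this
    simpa using h2
  have hs := hgc.le_slope_of_hasDerivAt (Set.mem_univ (0:ℝ)) (Set.mem_univ (1:ℝ))
      one_pos hderiv
  have : (0:ℝ) ≤ g 1 - g 0 := by simpa [slope] using hs
  have h0 : g 0 = F z := by simp [g]
  have h1 : g 1 = F y := by simp [g]
  linarith

/-- **Lemma 7**: under Assumption A1, if `⋂ᵢ {z : fᵢ(z) = 0} ≠ ∅` and the graph is
fixed, undirected and connected with positive symmetric weights, then for every
`K > 0` the set of global minimizers of `F_G(·; K)` is exactly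
`(⋂ᵢ {z : fᵢ(z) = 0})^N ∩ M`, `M` being the consensus manifold. -/
theorem statement8
    {m N : ℕ} (hm : 0 < m) (hN : 0 < N)
    (f : Fin N → EuclideanSpace ℝ (Fin m) → EuclideanSpace ℝ (Fin m))
    (F : Fin N → EuclideanSpace ℝ (Fin m) → ℝ)
    -- Assumption A1
    (hA1smooth : ∀ i, ContDiff ℝ 1 (F i))
    (hA1convex : ∀ i, ConvexOn ℝ Set.univ (F i))
    (hA1argmin : ∀ i, ∃ z, IsMinOn (F i) Set.univ z)
    (hA1grad : ∀ i z, HasGradientAt (F i) (-(f i z)) z)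
    -- nonempty intersection of the zero sets
    (hne : (⋂ i, {z | f i z = 0}).Nonempty)
    -- fixed undirected connected graph with positive symmetric weights
    (a : Fin N → Fin N → ℝ)
    (hsymm : ∀ i j, a i j = a j i)
    (hnonneg : ∀ i j, 0 ≤ a i j)
    (hdiag : ∀ i, a i i = 0)
    (hconn : ∀ i j : Fin N, Relation.ReflTransGen (fun p q => 0 < a p q) i j)
    (K : ℝ) (hK : 0 < K) :
    {x : Fin N → EuclideanSpace ℝ (Fin m) | IsMinOn (FG F a K) Set.univ x}
      = {x : Fin N → EuclideanSpace ℝ (Fin m) |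
          (∀ i, x i ∈ ⋂ k, {z | f k z = 0}) ∧ ∀ i j, x i = x j} := by
  obtain ⟨z, hz⟩ := hne
  have hz0 : ∀ i, f i z = 0 := fun i => by
    have := Set.mem_iInter.mp hz i; simpa using this
  -- any zero of f i is a global minimizer of F i
  have hminw : ∀ i w, f i w = 0 → ∀ y, F i w ≤ F i y := by
    intro i w hw y
    refine min_of_grad_zero (F i) (hA1convex i) ?_ y
    have := hA1grad i w
    rwa [hw, neg_zero] at this
  have hmin : ∀ i y, F i z ≤ F i y := fun i => hminw i z (hz0 i)
  -- any global minimizer of F i is a zero of f i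
  have hzero : ∀ i w, (∀ y, F i w ≤ F i y) → f i w = 0 := by
    intro i w hw
    have hloc : IsLocalMin (F i) w := Filter.Eventually.of_forall hw
    have hfd := (hasGradientAt_iff_hasFDerivAt).mp (hA1grad i w)
    have h0 := hloc.hasFDerivAt_eq_zero hfd
    have := (InnerProductSpace.toDual ℝ (EuclideanSpace ℝ (Fin m))).map_eq_zero_iff.mp h0
    simpa [neg_eq_zero] using this
  -- quadratic part is nonnegative
  have hQnn : ∀ x : Fin N → EuclideanSpace ℝ (Fin m),
      0 ≤ ∑ i, ∑ j, a i j * ‖x j - x i‖ ^ 2 := by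
    intro x
    refine Finset.sum_nonneg fun i _ => Finset.sum_nonneg fun j _ => ?_
    exact mul_nonneg (hnonneg i j) (by positivity)
  -- quadratic part vanishes at consensus
  have hQ0 : ∀ x : Fin N → EuclideanSpace ℝ (Fin m), (∀ i j, x i = x j) →
      (∑ i, ∑ j, a i j * ‖x j - x i‖ ^ 2) = 0 := by
    intro x hx
    refine Finset.sum_eq_zero fun i _ => Finset.sum_eq_zero fun j _ => ?_
    rw [hx j i, sub_self]
    simp
  ext x
  simp only [Set.mem_setOf_eq]
  constructor
  · intro hx
    have hle : FG F a K x ≤ FG F a K (fun _ => z) := isMinOn_iff.mp hx _ (Set.mem_univ _)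
    have hFGz : FG F a K (fun _ => z) = ∑ i, F i z := by
      have : (∑ i, ∑ j, a i j * ‖(fun _ : Fin N => z) j - (fun _ : Fin N => z) i‖ ^ 2) = 0 :=
        hQ0 _ (fun _ _ => rfl)
      simp [FG, this]
    have h1 : ∑ i, F i z ≤ ∑ i, F i (x i) := Finset.sum_le_sum fun i _ => hmin i (x i)
    have hq := hQnn x
    have hFGx : FG F a K x
        = (∑ i, F i (x i)) + (K / 2) * ((∑ i, ∑ j, a i j * ‖x j - x i‖ ^ 2) / 2) := rfl
    rw [hFGz, hFGx] at hle
    -- the quadratic term must vanish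
    have hQz : (∑ i, ∑ j, a i j * ‖x j - x i‖ ^ 2) = 0 := by nlinarith
    have hsum : (∑ i, F i (x i)) = ∑ i, F i z := by
      rw [hQz] at hle
      simp at hle
      linarith
    have hterm : ∀ i ∈ Finset.univ, F i z = F i (x i) :=
      (Finset.sum_eq_sum_iff_of_le (fun i _ => hmin i (x i))).mp hsum.symm
    have hxmin : ∀ i, ∀ y, F i (x i) ≤ F i y := by
      intro i y
      rw [← hterm i (Finset.mem_univ i)]
      exact hmin i y
    have hxzero : ∀ i, f i (x i) = 0 := fun i => hzero i (x i) (hxmin i)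
    -- consensus from vanishing quadratic term
    have hterms : ∀ i j, a i j * ‖x j - x i‖ ^ 2 = 0 := by
      intro i j
      have h1 := (Finset.sum_eq_zero_iff_of_nonneg
        (fun i _ => Finset.sum_nonneg fun j _ =>
          mul_nonneg (hnonneg i j) (by positivity))).mp hQz i (Finset.mem_univ i)
      exact (Finset.sum_eq_zero_iff_of_nonneg
        (fun j _ => mul_nonneg (hnonneg i j) (by positivity))).mp h1 j (Finset.mem_univ j)
    have hstep : ∀ p q, 0 < a p q → x p = x q := by
      intro p q hpq
      have := hterms p q
      have hn : ‖x q - x p‖ ^ 2 = 0 := by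
        rcases mul_eq_zero.mp this with h | h
        · exact absurd h (ne_of_gt hpq)
        · exact h
      have : x q - x p = 0 := by
        rwa [pow_eq_zero_iff (by norm_num), norm_eq_zero] at hn
      exact (sub_eq_zero.mp this).symm
    have hcons : ∀ i j, x i = x j := by
      intro i j
      induction hconn i j with
      | refl => rfl
      | tail _ h2 ih => exact ih.trans (hstep _ _ h2)
    refine ⟨fun i => Set.mem_iInter.mpr fun k => ?_, hcons⟩
    show f k (x i) = 0
    rw [hcons i k]
    exact hxzero k
  · rintro ⟨h1, h2⟩
    have hxzero : ∀ k i, f k (x i) = 0 := by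
      intro k i
      have := Set.mem_iInter.mp (h1 i) k
      simpa using this
    have hxmin : ∀ i y, F i (x i) ≤ F i y := fun i => hminw i (x i) (hxzero i i)
    refine isMinOn_iff.mpr fun y _ => ?_
    have hqx : (∑ i, ∑ j, a i j * ‖x j - x i‖ ^ 2) = 0 := hQ0 x h2
    have hqy := hQnn y
    have hsum : (∑ i, F i (x i)) ≤ ∑ i, F i (y i) :=
      Finset.sum_le_sum fun i _ => hxmin i (y i)
    show (∑ i, F i (x i)) + (K / 2) * ((∑ i, ∑ j, a i j * ‖x j - x i‖ ^ 2) / 2)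
      ≤ (∑ i, F i (y i)) + (K / 2) * ((∑ i, ∑ j, a i j * ‖y j - y i‖ ^ 2) / 2)
    rw [hqx]
    nlinarith
end

section
/- Suppose Assumption A1 holds and ∩_{i=1}^N {z ∈ ℝ^m : f_i(z) = 0} is nonempty; fix any z_* in this intersection. Then along every solution x(t) of the network system (with arbitrary switching signal), the function V(t) := max_{i=1,…,N} |x_i(t) − z_*|² is non-increasing in t; equivalently, its upper Dini derivative satisfies D⁺V(t) ≤ 0 for all t ≥ 0. -/
open Filter

open scoped RealInnerProductSpace

/-- Subgradient-type inequality: if `F` is convex with gradient `g` and `g z₀ = 0`,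
then `⟪g u, u - z₀⟫ ≥ 0` for all `u`. -/
lemma aux_grad_inner_nonneg {E : Type*} [NormedAddCommGroup E] [InnerProductSpace ℝ E]
    [CompleteSpace E] {F : E → ℝ} {g : E → E} (hconv : ConvexOn ℝ Set.univ F)
    (hg : ∀ z, HasGradientAt F (g z) z) {z₀ : E} (h0 : g z₀ = 0) (u : E) :
    0 ≤ ⟪g u, u - z₀⟫ := by
  set d := u - z₀ with hd
  have hc : ∀ s : ℝ, HasDerivAt (fun s : ℝ => z₀ + s • d) d s := fun s => by
    simpa using ((hasDerivAt_id s).smul_const d).const_add z₀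
  have hφ : ∀ s : ℝ, HasDerivAt (fun s : ℝ => F (z₀ + s • d)) ⟪g (z₀ + s • d), d⟫ s := by
    intro s
    have h := (hg (z₀ + s • d)).hasFDerivAt.comp_hasDerivAt s (hc s)
    simp at h
    exact h
  have hφconv : ConvexOn ℝ Set.univ (fun s : ℝ => F (z₀ + s • d)) := by
    have h := hconv.comp_affineMap (AffineMap.lineMap z₀ u (k := ℝ))
    have he : (fun s : ℝ => F (z₀ + s • d)) = F ∘ (AffineMap.lineMap z₀ u (k := ℝ)) := by
      funext s
      simp [AffineMap.lineMap_apply, hd, add_comm]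
    rw [he]
    simpa using h
  have h1 := hφconv.le_slope_of_hasDerivAt (Set.mem_univ (0 : ℝ)) (Set.mem_univ (1 : ℝ))
    zero_lt_one (hφ 0)
  have h2 := hφconv.slope_le_of_hasDerivAt (Set.mem_univ (0 : ℝ)) (Set.mem_univ (1 : ℝ))
    zero_lt_one (hφ 1)
  have e0 : z₀ + (0 : ℝ) • d = z₀ := by simp
  have e1 : z₀ + (1 : ℝ) • d = u := by simp [hd]
  rw [e0, h0, inner_zero_left] at h1
  rw [e1] at h2
  linarith

/-- **Lemma 8**: under Assumption A1, if `z_* ∈ ⋂ᵢ {z : fᵢ(z) = 0}`, then along every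
solution of the switching network system (with arbitrary switching signal) the
function `V(t) = maxᵢ |xᵢ(t) − z_*|²` is non-increasing on `[0, ∞)` (equivalently,
its upper Dini derivative is nonpositive). -/
theorem statement9
    {m N : ℕ} (hm : 0 < m) (hN : 0 < N)
    (f : Fin N → EuclideanSpace ℝ (Fin m) → EuclideanSpace ℝ (Fin m))
    (F : Fin N → EuclideanSpace ℝ (Fin m) → ℝ)
    -- Assumption A1
    (hA1smooth : ∀ i, ContDiff ℝ 1 (F i))
    (hA1convex : ∀ i, ConvexOn ℝ Set.univ (F i))
    (hA1argmin : ∀ i, ∃ z, IsMinOn (F i) Set.univ z)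
    (hA1grad : ∀ i z, HasGradientAt (F i) (-(f i z)) z)
    -- a common zero of the self-dynamics
    (zs : EuclideanSpace ℝ (Fin m)) (hzs : zs ∈ ⋂ i, {z | f i z = 0})
    -- coupling gain
    (K : ℝ) (hK : 0 ≤ K)
    -- switching weighted adjacency with weights in [a_*, a^*] on existing arcs
    (A : ℝ → Fin N → Fin N → ℝ)
    (aL aU : ℝ) (haL : 0 < aL)
    (hbounds : ∀ t i j, A t i j = 0 ∨ (aL ≤ A t i j ∧ A t i j ≤ aU))
    -- piecewise constant switching with dwell time τ
    (τ : ℝ) (hτ : 0 < τ)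
    (hpc : ∀ t : ℝ, 0 ≤ t → ∃ t₀, t₀ ≤ t ∧ t < t₀ + τ ∧
        ∀ s, t₀ ≤ s → s < t₀ + τ → A s = A t₀)
    -- a solution of the network system
    (x : ℝ → Fin N → EuclideanSpace ℝ (Fin m))
    (hx : ∀ i, ∀ t : ℝ, 0 ≤ t → HasDerivWithinAt (fun s => x s i)
        (f i (x t i) + K • ∑ j, A t i j • (x t j - x t i)) (Set.Ici 0) t) :
    AntitoneOn (fun t => ⨆ i, ‖x t i - zs‖ ^ 2) (Set.Ici (0 : ℝ)) := by
  haveI : Nonempty (Fin N) := ⟨⟨0, hN⟩⟩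
  have hne : (Finset.univ : Finset (Fin N)).Nonempty := Finset.univ_nonempty
  set W : Fin N → ℝ → ℝ := fun i t => ‖x t i - zs‖ ^ 2 with hWdef
  set V : ℝ → ℝ := fun t => Finset.univ.sup' hne (fun i => W i t) with hVdef
  have hVeq : (fun t => ⨆ i, ‖x t i - zs‖ ^ 2) = V := by
    funext t
    rw [hVdef]
    exact (Finset.sup'_univ_eq_ciSup (fun i => W i t)).symm
  rw [hVeq]
  -- nonneg of A
  have hAnn : ∀ t i j, 0 ≤ A t i j := by
    intro t i j
    rcases hbounds t i j with h | h
    · exact le_of_eq h.symm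
    · linarith
  -- zs is a common zero
  have hz0 : ∀ i, f i zs = 0 := by
    intro i
    have := Set.mem_iInter.mp hzs i
    exact this
  -- derivative of each W i
  have hWd : ∀ i, ∀ t : ℝ, 0 ≤ t → HasDerivWithinAt (W i)
      (2 * ⟪x t i - zs, f i (x t i) + K • ∑ j, A t i j • (x t j - x t i)⟫)
      (Set.Ici 0) t := by
    intro i t ht
    have hu : HasDerivWithinAt (fun s => x s i - zs)
        (f i (x t i) + K • ∑ j, A t i j • (x t j - x t i)) (Set.Ici 0) t :=
      (hx i t ht).sub_const zs
    have h := hu.inner ℝ hu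
    have heq : (fun s => ⟪x s i - zs, x s i - zs⟫) = W i := by
      funext s
      rw [real_inner_self_eq_norm_sq, hWdef]
    rw [heq] at h
    refine h.congr_deriv ?_
    rw [real_inner_comm (f i (x t i) + K • ∑ j, A t i j • (x t j - x t i)) (x t i - zs)]
    ring
  -- continuity
  have hWc : ∀ i, ContinuousOn (W i) (Set.Ici 0) := fun i t ht =>
    (hWd i t ht).continuousWithinAt
  -- key inequality: at a maximal index the derivative is nonpositive
  have hkey : ∀ t : ℝ, 0 ≤ t → ∀ j : Fin N, (∀ k, W k t ≤ W j t) →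
      2 * ⟪x t j - zs, f j (x t j) + K • ∑ k, A t j k • (x t k - x t j)⟫ ≤ 0 := by
    intro t ht j hmax
    set u := x t j - zs with hu
    have hterm1 : ⟪u, f j (x t j)⟫ ≤ 0 := by
      have hg : ∀ z, HasGradientAt (F j) ((fun z => -(f j z)) z) z := fun z => hA1grad j z
      have h0 : (fun z => -(f j z)) zs = 0 := by simp [hz0 j]
      have := aux_grad_inner_nonneg (hA1convex j) hg h0 (x t j)
      rw [inner_neg_left] at this
      rw [real_inner_comm]
      linarith
    have hnorm : ∀ k, ‖x t k - zs‖ ≤ ‖u‖ := by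
      intro k
      have h2 : ‖x t k - zs‖ ^ 2 ≤ ‖u‖ ^ 2 := hmax k
      nlinarith [norm_nonneg (x t k - zs), norm_nonneg u]
    have hterm2 : ∀ k, ⟪u, x t k - x t j⟫ ≤ 0 := by
      intro k
      have he : x t k - x t j = (x t k - zs) - u := by rw [hu]; abel
      rw [he, inner_sub_right, real_inner_self_eq_norm_sq]
      have h1 : ⟪u, x t k - zs⟫ ≤ ‖u‖ * ‖x t k - zs‖ := real_inner_le_norm u _
      have h2 : ‖u‖ * ‖x t k - zs‖ ≤ ‖u‖ * ‖u‖ :=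
        mul_le_mul_of_nonneg_left (hnorm k) (norm_nonneg u)
      nlinarith [norm_nonneg u]
    have hsum : ⟪u, K • ∑ k, A t j k • (x t k - x t j)⟫ ≤ 0 := by
      rw [real_inner_smul_right, inner_sum]
      have : ∀ k ∈ Finset.univ, ⟪u, A t j k • (x t k - x t j)⟫ ≤ 0 := by
        intro k _
        rw [real_inner_smul_right]
        exact mul_nonpos_of_nonneg_of_nonpos (hAnn t j k) (hterm2 k)
      have hs : ∑ k, ⟪u, A t j k • (x t k - x t j)⟫ ≤ 0 :=
        Finset.sum_nonpos this
      exact mul_nonpos_of_nonneg_of_nonpos hK hs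
    rw [inner_add_right]
    linarith
  -- now prove antitonicity via the fencing lemma
  intro a ha b hb hab
  simp only [Set.mem_Ici] at ha hb
  have hVcont : ContinuousOn V (Set.Icc a b) := by
    rw [hVdef]
    exact ContinuousOn.finset_sup'_apply hne fun i _ =>
      (hWc i).mono (fun s hs => le_trans ha hs.1)
  have main : ∀ ⦃z⦄, z ∈ Set.Icc a b → V z ≤ (fun _ : ℝ => V a) z := by
    apply image_le_of_liminf_slope_right_le_deriv_boundary (B := fun _ => V a) (B' := fun _ => (0:ℝ)) hVcont le_rfl
      continuousOn_const (fun s _ => hasDerivWithinAt_const s _ (V a))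
    intro t htm r hr
    apply Filter.Eventually.frequently
    have ht0 : (0 : ℝ) ≤ t := le_trans ha htm.1
    have hIoi : Set.Ioi t ⊆ Set.Ici (0 : ℝ) := fun z hz => le_of_lt (lt_of_le_of_lt ht0 hz)
    -- for each j, eventually W j z < V t + r * (z - t)
    have hj : ∀ j : Fin N, ∀ᶠ z in nhdsWithin t (Set.Ioi t), W j z < V t + r * (z - t) := by
      intro j
      have hjle : W j t ≤ V t := Finset.le_sup' (fun i => W i t) (Finset.mem_univ j)
      rcases eq_or_lt_of_le hjle with heq | hlt
      · -- j attains the max; use the derivative bound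
        have hmax : ∀ k, W k t ≤ W j t := by
          intro k
          rw [heq]
          exact Finset.le_sup' (fun i => W i t) (Finset.mem_univ k)
        have hd : HasDerivWithinAt (W j)
            (2 * ⟪x t j - zs, f j (x t j) + K • ∑ k, A t j k • (x t k - x t j)⟫)
            (Set.Ioi t) t := (hWd j t ht0).mono hIoi
        have hdle : 2 * ⟪x t j - zs, f j (x t j) + K • ∑ k, A t j k • (x t k - x t j)⟫ ≤ 0 :=
          hkey t ht0 j hmax
        have hts : Filter.Tendsto (slope (W j) t) (nhdsWithin t (Set.Ioi t))
            (nhds (2 * ⟪x t j - zs, f j (x t j) + K • ∑ k, A t j k • (x t k - x t j)⟫)) :=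
          (hasDerivWithinAt_iff_tendsto_slope' (Set.notMem_Ioi_self)).mp hd
        have hev : ∀ᶠ z in nhdsWithin t (Set.Ioi t), slope (W j) t z < r :=
          hts.eventually_lt_const (lt_of_le_of_lt hdle hr)
        filter_upwards [hev, self_mem_nhdsWithin] with z hz (hzt : t < z)
        rw [slope_def_field] at hz
        have hpos : 0 < z - t := sub_pos.mpr hzt
        rw [div_lt_iff₀ hpos] at hz
        rw [← heq]
        linarith
      · -- W j t < V t; use continuity
        have hts : Filter.Tendsto (W j) (nhdsWithin t (Set.Ioi t)) (nhds (W j t)) :=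
          ((hWc j t ht0).mono_left (nhdsWithin_mono t hIoi))
        have hev : ∀ᶠ z in nhdsWithin t (Set.Ioi t), W j z < V t :=
          hts.eventually_lt_const hlt
        filter_upwards [hev, self_mem_nhdsWithin] with z hz (hzt : t < z)
        have hpos : 0 < r * (z - t) := mul_pos hr (sub_pos.mpr hzt)
        linarith
    have hall : ∀ᶠ z in nhdsWithin t (Set.Ioi t), ∀ j : Fin N, W j z < V t + r * (z - t) :=
      eventually_all.mpr hj
    filter_upwards [hall, self_mem_nhdsWithin] with z hz (hzt : t < z)
    have hVz : V z < V t + r * (z - t) := by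
      rw [hVdef]
      exact (Finset.sup'_lt_iff hne).mpr fun i _ => hz i
    rw [slope_def_field]
    have hpos : 0 < z - t := sub_pos.mpr hzt
    rw [div_lt_iff₀ hpos]
    linarith
  exact main ⟨hab, le_rfl⟩
end

section
/- Let K ⊆ ℝ^m be a nonempty closed convex set, let P_K denote the Euclidean projection onto K, write |x|_K := dist(x, K), and let x_a, x_b ∈ ℝ^m. Then: (i) ⟨x_a − P_K(x_a), x_b − x_a⟩ ≤ |x_a|_K · | |x_a|_K − |x_b|_K |; and (ii) if |x_a|_K > |x_b|_K, then ⟨x_a − P_K(x_a), x_b − x_a⟩ ≤ − |x_a|_K · (|x_a|_K − |x_b|_K). -/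
/-- **Lemma 5**: let `K ⊆ ℝᵐ` be a nonempty closed convex set, `P_K` the Euclidean
projection onto `K` (here `pa` is the projection of `xa`, characterized by
`pa ∈ K` and `dist xa pa = dist(xa, K)`), and write `|x|_K = dist(x, K)`.  Then
(i) `⟨xa − P_K(xa), xb − xa⟩ ≤ |xa|_K · ||xa|_K − |xb|_K|`; and
(ii) if `|xa|_K > |xb|_K` then
`⟨xa − P_K(xa), xb − xa⟩ ≤ −|xa|_K · (|xa|_K − |xb|_K)`. -/
theorem statement13
    {m : ℕ} (Kset : Set (EuclideanSpace ℝ (Fin m)))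
    (hKne : Kset.Nonempty) (hKclosed : IsClosed Kset) (hKconvex : Convex ℝ Kset)
    (xa xb pa : EuclideanSpace ℝ (Fin m))
    (hpa : pa ∈ Kset) (hproj : dist xa pa = Metric.infDist xa Kset) :
    (inner ℝ (xa - pa) (xb - xa) : ℝ) ≤
        Metric.infDist xa Kset * |Metric.infDist xa Kset - Metric.infDist xb Kset| ∧
    (Metric.infDist xb Kset < Metric.infDist xa Kset →
      (inner ℝ (xa - pa) (xb - xa) : ℝ) ≤
        -(Metric.infDist xa Kset * (Metric.infDist xa Kset - Metric.infDist xb Kset))) := by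
  obtain ⟨pb, hpb, hpbd⟩ := hKclosed.exists_infDist_eq_dist hKne xb
  set dA := Metric.infDist xa Kset with hdA
  set dB := Metric.infDist xb Kset with hdB
  have hnormA : ‖xa - pa‖ = dA := by rw [← dist_eq_norm, hproj]
  have hnormB : ‖xb - pb‖ = dB := by rw [← dist_eq_norm, hpbd]
  have hiInf : ‖xa - pa‖ = ⨅ w : Kset, ‖xa - (w : EuclideanSpace ℝ (Fin m))‖ := by
    rw [hnormA, hdA, Metric.infDist_eq_iInf]
    simp_rw [dist_eq_norm]
  have hineq : ∀ w ∈ Kset, (inner ℝ (xa - pa) (w - pa) : ℝ) ≤ 0 :=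
    (norm_eq_iInf_iff_real_inner_le_zero hKconvex hpa).mp hiInf
  have h1 : (inner ℝ (xa - pa) (pb - pa) : ℝ) ≤ 0 := hineq pb hpb
  have h2 : (inner ℝ (xa - pa) (xb - pb) : ℝ) ≤ dA * dB := by
    calc (inner ℝ (xa - pa) (xb - pb) : ℝ) ≤ ‖xa - pa‖ * ‖xb - pb‖ := real_inner_le_norm _ _
    _ = dA * dB := by rw [hnormA, hnormB]
  have hself : (inner ℝ (xa - pa) (xa - pa) : ℝ) = dA * dA := by
    rw [real_inner_self_eq_norm_mul_norm, hnormA]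
  have hsplit : (inner ℝ (xa - pa) (xb - xa) : ℝ) =
      (inner ℝ (xa - pa) (xb - pb) : ℝ) + (inner ℝ (xa - pa) (pb - pa) : ℝ)
        - (inner ℝ (xa - pa) (xa - pa) : ℝ) := by
    rw [← inner_add_right, ← inner_sub_right]
    congr 1
    abel
  have hkey : (inner ℝ (xa - pa) (xb - xa) : ℝ) ≤ dA * (dB - dA) := by
    rw [hsplit]; nlinarith
  have hA0 : 0 ≤ dA := Metric.infDist_nonneg
  constructor
  · have habs : dB - dA ≤ |dA - dB| := by
      rw [abs_sub_comm]; exact le_abs_self _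
    nlinarith
  · intro h
    nlinarith
end

section
/- Let m = 1 and suppose Assumption A1 holds with F_i : ℝ → ℝ. Pick x_i* ∈ argmin F_i for each i, set y_* := min{x_1*,…,x_N*} and y^* := max{x_1*,…,x_N*}, and fix η > 0. Then for any coupling gain K ≥ 0, the cube C_*^η := {(x_1,…,x_N) ∈ ℝ^N : x_i ∈ [y_* − η, y^* + η] for all i} is a positively invariant set of the network system: any solution with x(t_0) ∈ C_*^η satisfies x(t) ∈ C_*^η for all t ≥ t_0. -/
open Filter
open Set Topology

lemma key_upper {N : ℕ} (hN : 0 < N) (f : Fin N → ℝ → ℝ)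
    (a : Fin N → Fin N → ℝ) (hnonneg : ∀ i j, 0 ≤ a i j)
    (K : ℝ) (hK : 0 ≤ K) (b : ℝ)
    (hf : ∀ i z, b ≤ z → f i z ≤ 0)
    (t₀ : ℝ) (x : ℝ → Fin N → ℝ)
    (hx : ∀ i, ∀ t : ℝ, t₀ ≤ t → HasDerivWithinAt (fun s => x s i)
        (f i (x t i) + K * ∑ j, a i j * (x t j - x t i)) (Set.Ici t₀) t)
    (h0 : ∀ i, x t₀ i ≤ b) :
    ∀ t : ℝ, t₀ ≤ t → ∀ i, x t i ≤ b := by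
  haveI : NeZero N := ⟨hN.ne'⟩
  have hne : (Finset.univ : Finset (Fin N)).Nonempty := Finset.univ_nonempty
  set g : ℝ → ℝ := fun t => Finset.univ.sup' hne (fun i => x t i) with hg
  have hle : ∀ t i, x t i ≤ g t := fun t i => Finset.le_sup' _ (Finset.mem_univ i)
  have hach : ∀ t, ∃ i, x t i = g t := by
    intro t
    obtain ⟨i, _, hi⟩ := Finset.exists_mem_eq_sup' hne (fun i => x t i)
    exact ⟨i, hi.symm⟩
  set d : ℝ → Fin N → ℝ := fun t i => f i (x t i) + K * ∑ j, a i j * (x t j - x t i) with hd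
  -- main claim: g t ≤ b for all t ≥ t₀
  suffices hmain : ∀ t : ℝ, t₀ ≤ t → g t ≤ b by
    intro t ht i; exact (hle t i).trans (hmain t ht)
  intro T hT
  -- suffices with ε-margin
  have hε : ∀ ε : ℝ, 0 < ε → g T ≤ b + ε * (T - t₀) := by
    intro ε hε
    set A : ℝ → Finset (Fin N) := fun t => Finset.univ.filter (fun i => x t i = g t) with hA
    have hAne : ∀ t, (A t).Nonempty := by
      intro t; obtain ⟨i, hi⟩ := hach t
      exact ⟨i, by simp [hA, hi]⟩
    set f' : ℝ → ℝ := fun t => (A t).sup' (hAne t) (d t) with hf'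
    set B : ℝ → ℝ := fun t => b + ε * (t - t₀) with hB
    have hcont : ∀ i, ContinuousOn (fun s => x s i) (Icc t₀ T) :=
      fun i t ht => ((hx i t ht.1).continuousWithinAt).mono Icc_subset_Ici_self
    have hgc : ContinuousOn g (Icc t₀ T) :=
      ContinuousOn.finset_sup'_apply hne (fun i _ => hcont i)
    have hBd : ∀ s : ℝ, HasDerivAt B ε s := by
      intro s
      have : HasDerivAt (fun t : ℝ => b + ε * (t - t₀)) (ε * 1) s :=
        (((hasDerivAt_id s).sub_const t₀).const_mul ε).const_add b
      rw [mul_one] at this; exact this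
    have key : ∀ ⦃t⦄, t ∈ Icc t₀ T → g t ≤ B t := by
      refine image_le_of_liminf_slope_right_lt_deriv_boundary (f' := f') hgc ?_ ?_ hBd ?_
      · -- slope condition
        intro t ht r hr
        have hfreq : ∀ᶠ z in 𝓝[>] t, slope g t z < r := by
          have hz : ∀ i, ∀ᶠ z in 𝓝[>] t, x z i < g t + r * (z - t) := by
            intro i
            by_cases hi : x t i = g t
            · have hdi : d t i < r :=
                lt_of_le_of_lt (Finset.le_sup' (d t) (by simp [hA, hi])) hr
              have hts : Tendsto (slope (fun s => x s i) t) (𝓝[>] t) (𝓝 (d t i)) := by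
                have h1 := hasDerivWithinAt_iff_tendsto_slope.mp (hx i t ht.1)
                exact h1.mono_left (nhdsWithin_mono t
                  (fun z hz => ⟨le_trans ht.1 (le_of_lt hz), ne_of_gt hz⟩))
              filter_upwards [hts.eventually_lt_const hdi, self_mem_nhdsWithin] with z hs hzt
              have hzt' : (0:ℝ) < z - t := sub_pos.mpr hzt
              rw [slope_def_field, div_lt_iff₀ hzt'] at hs
              have := hi ▸ hs
              linarith
            · have hlt : x t i < g t := lt_of_le_of_ne (hle t i) hi
              have hct : Tendsto (fun z => x z i - r * (z - t)) (𝓝[>] t)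
                  (𝓝 (x t i - r * (t - t))) := by
                refine Tendsto.sub ?_ ?_
                · exact ((hx i t ht.1).continuousWithinAt).tendsto.mono_left
                    (nhdsWithin_mono t (fun z hz => le_trans ht.1 (le_of_lt hz)))
                · exact ((continuous_const.mul (continuous_id.sub continuous_const)).tendsto t).mono_left
                    nhdsWithin_le_nhds
              have : x t i - r * (t - t) < g t := by simpa using hlt
              filter_upwards [hct.eventually_lt_const this] with z hz
              linarith
          filter_upwards [eventually_all.mpr hz, self_mem_nhdsWithin] with z hzall hzt
          have hzt' : (0:ℝ) < z - t := sub_pos.mpr hzt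
          have hgz : g z < g t + r * (z - t) := by
            refine (Finset.sup'_lt_iff hne).mpr ?_
            intro i _; exact hzall i
          rw [slope_def_field, div_lt_iff₀ hzt']
          linarith
        exact hfreq.frequently
      · -- initial condition
        show g t₀ ≤ B t₀
        have : g t₀ ≤ b := Finset.sup'_le hne _ (fun i _ => h0 i)
        simp only [hB]
        linarith
      · -- bound at contact points
        intro t ht heq
        show f' t < ε
        refine (Finset.sup'_lt_iff (hAne t)).mpr ?_
        intro i hi
        have hxi : x t i = g t := by simpa [hA] using hi
        have hbx : b ≤ x t i := by
          rw [hxi, heq]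
          have : 0 ≤ ε * (t - t₀) := mul_nonneg hε.le (sub_nonneg.mpr ht.1)
          simp only [hB]; linarith
        have h1 : f i (x t i) ≤ 0 := hf i _ hbx
        have h2 : ∑ j, a i j * (x t j - x t i) ≤ 0 := by
          refine Finset.sum_nonpos ?_
          intro j _
          have : x t j - x t i ≤ 0 := by
            rw [hxi]; exact sub_nonpos.mpr (hle t j)
          exact mul_nonpos_iff.mpr (Or.inl ⟨hnonneg i j, this⟩)
        have h3 : K * ∑ j, a i j * (x t j - x t i) ≤ 0 :=
          mul_nonpos_iff.mpr (Or.inl ⟨hK, h2⟩)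
        have : d t i ≤ 0 := add_nonpos h1 h3
        linarith
    exact key ⟨hT, le_refl T⟩
  -- let ε → 0
  refine le_of_forall_pos_le_add ?_
  intro δ hδ
  have hTpos : (0:ℝ) < T - t₀ + 1 := by linarith
  have hε' : (0:ℝ) < δ / (T - t₀ + 1) := div_pos hδ hTpos
  have := hε _ hε'
  have hmul : δ / (T - t₀ + 1) * (T - t₀) ≤ δ := by
    rw [div_mul_eq_mul_div, div_le_iff₀ hTpos]
    nlinarith [sub_nonneg.mpr hT]
  linarith

/-- **Invariance of the cube `C_*^η`** (claim in the proof of Proposition 2): with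
scalar node states (`m = 1`), under Assumption A1, pick `xᵢ* ∈ argmin Fᵢ`, set
`y_* = minᵢ xᵢ*`, `y^* = maxᵢ xᵢ*`, and fix `η > 0`.  Then for every coupling gain
`K ≥ 0` the cube `C_*^η = { x : xᵢ ∈ [y_* − η, y^* + η] ∀i }` is positively
invariant for the network system over a fixed undirected graph. -/
theorem statement14
    {N : ℕ} (hN : 0 < N)
    (f : Fin N → ℝ → ℝ) (F : Fin N → ℝ → ℝ)
    -- Assumption A1 with m = 1
    (hA1smooth : ∀ i, ContDiff ℝ 1 (F i))
    (hA1convex : ∀ i, ConvexOn ℝ Set.univ (F i))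
    (hA1argmin : ∀ i, ∃ z, IsMinOn (F i) Set.univ z)
    (hA1grad : ∀ i z, HasDerivAt (F i) (-(f i z)) z)
    -- fixed undirected graph with positive symmetric weights
    (a : Fin N → Fin N → ℝ)
    (hsymm : ∀ i j, a i j = a j i)
    (hnonneg : ∀ i j, 0 ≤ a i j)
    (hdiag : ∀ i, a i i = 0)
    -- coupling gain
    (K : ℝ) (hK : 0 ≤ K)
    -- minimizers of the Fᵢ and the margin η
    (xstar : Fin N → ℝ) (hxstar : ∀ i, IsMinOn (F i) Set.univ (xstar i))
    (η : ℝ) (hη : 0 < η)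
    -- a solution of the network system on [t₀, ∞)
    (t₀ : ℝ) (x : ℝ → Fin N → ℝ)
    (hx : ∀ i, ∀ t : ℝ, t₀ ≤ t → HasDerivWithinAt (fun s => x s i)
        (f i (x t i) + K * ∑ j, a i j * (x t j - x t i)) (Set.Ici t₀) t)
    -- initial condition inside the cube C_*^η
    (h0 : ∀ i, x t₀ i ∈ Set.Icc ((⨅ j, xstar j) - η) ((⨆ j, xstar j) + η)) :
    ∀ t : ℝ, t₀ ≤ t →
      ∀ i, x t i ∈ Set.Icc ((⨅ j, xstar j) - η) ((⨆ j, xstar j) + η) := by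
  have hfin : ∀ i, xstar i ≤ ⨆ j, xstar j := fun i =>
    le_ciSup (Set.Finite.bddAbove (Set.finite_range xstar)) i
  have hinf : ∀ i, (⨅ j, xstar j) ≤ xstar i := fun i =>
    ciInf_le (Set.Finite.bddBelow (Set.finite_range xstar)) i
  have hfU : ∀ i z, (⨆ j, xstar j) + η ≤ z → f i z ≤ 0 := by
    intro i z hz
    have hlt : xstar i < z := lt_of_le_of_lt (hfin i) (by linarith)
    have hs := (hA1convex i).slope_le_of_hasDerivAt (Set.mem_univ (xstar i))
      (Set.mem_univ z) hlt (hA1grad i z)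
    rw [slope_def_field] at hs
    have hmin : F i (xstar i) ≤ F i z := isMinOn_iff.mp (hxstar i) z (Set.mem_univ z)
    have h0' : 0 ≤ (F i z - F i (xstar i)) / (z - xstar i) :=
      div_nonneg (by linarith) (by linarith)
    linarith
  have hfL : ∀ i z, -((⨅ j, xstar j) - η) ≤ z → -(f i (-z)) ≤ 0 := by
    intro i z hz
    have hlt : -z < xstar i := by linarith [hinf i]
    have hs := (hA1convex i).le_slope_of_hasDerivAt (Set.mem_univ (-z))
      (Set.mem_univ (xstar i)) hlt (hA1grad i (-z))
    rw [slope_def_field] at hs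
    have hmin : F i (xstar i) ≤ F i (-z) := isMinOn_iff.mp (hxstar i) _ (Set.mem_univ _)
    have h0' : (F i (xstar i) - F i (-z)) / (xstar i - -z) ≤ 0 :=
      div_nonpos_of_nonpos_of_nonneg (by linarith) (by linarith)
    linarith
  have hupper := key_upper hN f a hnonneg K hK ((⨆ j, xstar j) + η) hfU t₀ x hx
    (fun i => (h0 i).2)
  have hxL : ∀ i, ∀ t : ℝ, t₀ ≤ t → HasDerivWithinAt (fun s => (fun s i => -(x s i)) s i)
      ((fun i z => -(f i (-z))) i ((fun s i => -(x s i)) t i)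
        + K * ∑ j, a i j * ((fun s i => -(x s i)) t j - (fun s i => -(x s i)) t i))
      (Set.Ici t₀) t := by
    intro i t ht
    have h : HasDerivWithinAt (fun s => -(x s i))
        (-(f i (x t i) + K * ∑ j, a i j * (x t j - x t i))) (Set.Ici t₀) t := (hx i t ht).fun_neg
    convert h using 1
    have hterm : ∀ j, a i j * (-(x t j) - -(x t i)) = -(a i j * (x t j - x t i)) :=
      fun j => by ring
    rw [Finset.sum_congr rfl (fun j _ => hterm j), Finset.sum_neg_distrib]
    ring
  have hlower := key_upper hN (fun i z => -(f i (-z))) a hnonneg K hK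
    (-((⨅ j, xstar j) - η)) hfL t₀ (fun s i => -(x s i)) hxL
    (fun i => by have := (h0 i).1; show -(x t₀ i) ≤ _; linarith)
  intro t ht i
  refine ⟨?_, hupper t ht i⟩
  have : -(x t i) ≤ -((⨅ j, xstar j) - η) := hlower t ht i
  linarith
end

section
/- Suppose Assumption A1 holds, let G be a fixed undirected connected graph on N nodes with positive symmetric weights a_{ij} = a_{ji} > 0, let P be its weighted Laplacian matrix, and let λ_2* > 0 denote the second smallest eigenvalue of P. Fix K > 0 and let p = (p_1,…,p_N) ∈ ℝ^{mN} be a global minimizer of F_G(·; K), with p_ave := (1/N) Σ_{i=1}^N p_i. Then Σ_{i=1}^N |p_i − p_ave|² ≤ (L/(K λ_2*))², where L := |(f_1(p_1), …, f_N(p_N))| is the Euclidean norm of the stacked vector of node self-dynamics evaluated at p. -/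
open Filter

open Metric Module.End
open scoped RealInnerProductSpace

set_option maxHeartbeats 1000000

lemma euclid_inner {N : ℕ} (x y : EuclideanSpace ℝ (Fin N)) :
    ⟪x, y⟫ = ∑ i, x i * y i := by
  simp [PiLp.inner_apply, RCLike.inner_apply, RCLike.conj_to_real]
  exact Finset.sum_congr rfl fun i _ => mul_comm _ _

lemma rayleigh_lower {N : ℕ} (P : Matrix (Fin N) (Fin N) ℝ)
    (hsym : P.IsHermitian)
    (hrow : ∀ i, ∑ j, P i j = 0)
    (lam2 : ℝ)
    (hlam2 : IsLeast {r : ℝ | ∃ v : Fin N → ℝ, v ≠ 0 ∧ (∑ i, v i) = 0 ∧ P.mulVec v = r • v} lam2)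
    (w : Fin N → ℝ) (hw : ∑ i, w i = 0) :
    lam2 * ∑ i, w i ^ 2 ≤ ∑ i, w i * P.mulVec w i := by
  classical
  set E' := EuclideanSpace ℝ (Fin N)
  set T : E' →ₗ[ℝ] E' := Matrix.toEuclideanLin P with hTdef
  have hT : T.IsSymmetric := Matrix.isHermitian_iff_isSymmetric.mp hsym
  set eqv := WithLp.equiv 2 (Fin N → ℝ)
  set ones : E' := eqv.symm (fun _ => 1) with hones
  have hinner_ones : ∀ v : E', ⟪ones, v⟫ = ∑ i, eqv v i := by
    intro v
    rw [euclid_inner]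
    simp [ones, eqv]
  have hTapp : ∀ v : E', T v = eqv.symm (P.mulVec (eqv v)) := fun v =>
    Matrix.toEuclideanLin_apply P v
  have hTones : T ones = 0 := by
    rw [hTapp]
    have : P.mulVec (eqv ones) = 0 := by
      funext i
      simp [Matrix.mulVec, dotProduct, ones, eqv, hrow i]
    simp [this]
    rfl
  set S : Submodule ℝ E' := (ℝ ∙ ones)ᗮ with hS
  have hmemS : ∀ v : E', v ∈ S ↔ (∑ i, eqv v i) = 0 := by
    intro v
    rw [hS, Submodule.mem_orthogonal_singleton_iff_inner_right, hinner_ones]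
  have hinv : ∀ v ∈ S, T v ∈ S := by
    intro v hv
    rw [hS, Submodule.mem_orthogonal_singleton_iff_inner_right]
    rw [← hT ones v, hTones, inner_zero_left]
  set T' : S →ₗ[ℝ] S := T.restrict hinv with hT'def
  have hT' : T'.IsSymmetric := hT.restrict_invariant hinv
  -- Nontrivial S
  obtain ⟨v0, hv0ne, hv0sum, hv0eig⟩ := hlam2.1
  have hv0S : eqv.symm v0 ∈ S := by
    rw [hmemS]; simpa [eqv] using hv0sum
  haveI : Nontrivial S := by
    refine nontrivial_of_ne ⟨eqv.symm v0, hv0S⟩ 0 ?_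
    simp only [ne_eq, Submodule.mk_eq_zero]
    intro h
    exact hv0ne (by simpa [eqv] using congrArg eqv h)
  haveI : FiniteDimensional ℝ S := inferInstance
  haveI : ProperSpace S := FiniteDimensional.proper_rclike ℝ S
  set Tc := hT'.toSelfAdjoint with hTc
  have hTcapp : ∀ x : S, (Tc : S →L[ℝ] S) x = T' x := fun x => hT'.toSelfAdjoint_apply
  -- min of reApplyInnerSelf on unit sphere
  obtain ⟨u, hune⟩ := exists_ne (0 : S)
  have hsphne : (sphere (0 : S) 1).Nonempty := by
    refine ⟨‖u‖⁻¹ • u, ?_⟩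
    have h0 : ‖u‖ ≠ 0 := norm_ne_zero_iff.mpr hune
    rw [mem_sphere_zero_iff_norm, norm_smul, norm_inv, norm_norm]
    exact inv_mul_cancel₀ h0
  obtain ⟨x₀, hx₀mem, hx₀min⟩ := (isCompact_sphere (0 : S) 1).exists_isMinOn hsphne
    (Tc : S →L[ℝ] S).reApplyInnerSelf_continuous.continuousOn
  have hx₀norm : ‖x₀‖ = 1 := by simpa using hx₀mem
  have hx₀ne : x₀ ≠ 0 := by
    intro h; rw [h] at hx₀norm; simp at hx₀norm
  have heig : HasEigenvector ((Tc : S →L[ℝ] S) : S →ₗ[ℝ] S)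
      ((Tc : S →L[ℝ] S).rayleighQuotient x₀) x₀ := by
    have := hTc ▸ hT'.toSelfAdjoint.prop
    refine IsSelfAdjoint.hasEigenvector_of_isLocalExtrOn hT'.toSelfAdjoint.prop hx₀ne
      (Or.inl ?_)
    rw [hx₀norm]
    exact hx₀min.localize
  set mu : ℝ := (Tc : S →L[ℝ] S).rayleighQuotient x₀ with hmu
  -- T' x₀ = mu • x₀
  have hx₀eig : T' x₀ = mu • x₀ := by
    have h1 := heig.apply_eq_smul
    simpa [hTcapp] using h1
  -- lift to P
  have hx₀eigP : P.mulVec (eqv (x₀ : E')) = mu • (eqv (x₀ : E')) := by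
    have h2 : T (x₀ : E') = mu • (x₀ : E') := by
      have := congrArg (Subtype.val) hx₀eig
      simpa [hT'def, LinearMap.restrict_apply] using this
    have := congrArg eqv h2
    rw [hTapp] at this
    exact this
  have hx₀sum : ∑ i, eqv (x₀ : E') i = 0 := (hmemS _).mp x₀.2
  have hx₀vne : eqv (x₀ : E') ≠ 0 := by
    intro h
    apply hx₀ne
    have : (x₀ : E') = 0 := by simpa [eqv] using congrArg eqv.symm h
    exact Subtype.coe_injective this
  have hlam2mu : lam2 ≤ mu := hlam2.2 ⟨eqv (x₀ : E'), hx₀vne, hx₀sum, hx₀eigP⟩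
  -- now the bound for w
  by_cases hw0 : w = 0
  · simp [hw0, Matrix.mulVec_zero]
  · set wE : E' := eqv.symm w with hwE
    have hwS : wE ∈ S := by rw [hmemS]; simpa [eqv, hwE] using hw
    set ω : S := ⟨wE, hwS⟩ with hω
    have hωne : ω ≠ 0 := by
      simp only [hω, ne_eq, Submodule.mk_eq_zero]
      intro h
      exact hw0 (by simpa [eqv, hwE] using congrArg eqv h)
    have hnorm : ‖ω‖ ≠ 0 := norm_ne_zero_iff.mpr hωne
    have hymem : ‖ω‖⁻¹ • ω ∈ sphere (0 : S) 1 := by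
      rw [mem_sphere_zero_iff_norm, norm_smul]
      simp
      exact inv_mul_cancel₀ hnorm
    have hmin := hx₀min hymem
    -- reApplyInnerSelf values
    have hval : (Tc : S →L[ℝ] S).reApplyInnerSelf (‖ω‖⁻¹ • ω)
        = ‖ω‖⁻¹ ^ 2 * ⟪(T' ω : S), ω⟫ := by
      rw [ContinuousLinearMap.reApplyInnerSelf_apply]
      rw [map_smul, hTcapp, real_inner_smul_left, real_inner_smul_right, RCLike.re_to_real]
      ring
    have hval0 : (Tc : S →L[ℝ] S).reApplyInnerSelf x₀ = mu := by
      rw [hmu, ContinuousLinearMap.rayleighQuotient, hx₀norm]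
      norm_num
    have key : mu * ‖ω‖ ^ 2 ≤ ⟪(T' ω : S), ω⟫ := by
      have h3 : mu ≤ ‖ω‖⁻¹ ^ 2 * ⟪(T' ω : S), ω⟫ := by
        rw [← hval0, ← hval]; exact hmin
      have h4 : 0 < ‖ω‖ ^ 2 := by positivity
      calc mu * ‖ω‖ ^ 2 ≤ (‖ω‖⁻¹ ^ 2 * ⟪(T' ω : S), ω⟫) * ‖ω‖ ^ 2 := by
            exact mul_le_mul_of_nonneg_right h3 (le_of_lt h4)
        _ = ⟪(T' ω : S), ω⟫ := by
            have hwEnorm : (‖ω‖ : ℝ) ^ 2 ≠ 0 := by positivity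
            have h8 : (‖wE‖ : ℝ) ^ 2 ≠ 0 := hwEnorm
            field_simp
    -- translate to sums
    have hip : ⟪(T' ω : S), ω⟫ = ∑ i, w i * P.mulVec w i := by
      have h6 : ⟪(T' ω : S), ω⟫ = ⟪T wE, wE⟫ := rfl
      rw [h6, hTapp, euclid_inner]
      refine Finset.sum_congr rfl fun i _ => ?_
      have e1 : (eqv.symm (P.mulVec (eqv wE))) i = P.mulVec w i := by
        simp [eqv, hwE]
      have e2 : wE i = w i := by simp [eqv, hwE]
      rw [e1, e2, mul_comm]
    have hnormsq : (‖ω‖ : ℝ) ^ 2 = ∑ i, w i ^ 2 := by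
      have h5 : ‖ω‖ ^ 2 = ⟪ω, ω⟫ := (real_inner_self_eq_norm_sq ω).symm
      rw [h5]
      have h7 : ⟪ω, ω⟫ = ⟪wE, wE⟫ := rfl
      rw [h7, euclid_inner]
      refine Finset.sum_congr rfl fun i _ => ?_
      have e2 : wE i = w i := by simp [eqv, hwE]
      rw [e2, sq]
    calc lam2 * ∑ i, w i ^ 2 ≤ mu * ∑ i, w i ^ 2 := by
          apply mul_le_mul_of_nonneg_right hlam2mu
          positivity
      _ = mu * ‖ω‖ ^ 2 := by rw [hnormsq]
      _ ≤ ⟪(T' ω : S), ω⟫ := key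
      _ = ∑ i, w i * P.mulVec w i := hip

lemma rayleigh_sq {N : ℕ} (P : Matrix (Fin N) (Fin N) ℝ)
    (hsym : P.IsHermitian)
    (hrow : ∀ i, ∑ j, P i j = 0)
    (lam2 : ℝ) (hlam2pos : 0 < lam2)
    (hlam2 : IsLeast {r : ℝ | ∃ v : Fin N → ℝ, v ≠ 0 ∧ (∑ i, v i) = 0 ∧ P.mulVec v = r • v} lam2)
    (w : Fin N → ℝ) (hw : ∑ i, w i = 0) :
    lam2 ^ 2 * ∑ i, w i ^ 2 ≤ ∑ i, P.mulVec w i ^ 2 := by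
  have h1 := rayleigh_lower P hsym hrow lam2 hlam2 w hw
  set A := ∑ i, w i ^ 2 with hA
  set B := ∑ i, P.mulVec w i ^ 2 with hB
  have hAnn : 0 ≤ A := Finset.sum_nonneg fun i _ => sq_nonneg _
  rcases eq_or_lt_of_le hAnn with hA0 | hApos
  · rw [← hA0, mul_zero]
    exact Finset.sum_nonneg fun i _ => sq_nonneg _
  · have hCS : (∑ i, w i * P.mulVec w i) ^ 2 ≤ A * B :=
      Finset.sum_mul_sq_le_sq_mul_sq Finset.univ w (P.mulVec w)
    have h2 : (lam2 * A) ^ 2 ≤ (∑ i, w i * P.mulVec w i) ^ 2 := by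
      apply pow_le_pow_left₀ (by positivity) h1
    have h3 : lam2 ^ 2 * A ^ 2 ≤ A * B := by
      calc lam2 ^ 2 * A ^ 2 = (lam2 * A) ^ 2 := by ring
        _ ≤ _ := h2.trans hCS
    have h4 : lam2 ^ 2 * A * A ≤ B * A := by
      calc lam2 ^ 2 * A * A = lam2 ^ 2 * A ^ 2 := by ring
        _ ≤ A * B := h3
        _ = B * A := by ring
    exact le_of_mul_le_mul_right h4 hApos

lemma eucl_norm_sq {m : ℕ} (x : EuclideanSpace ℝ (Fin m)) : ‖x‖ ^ 2 = ∑ α, x α ^ 2 := by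
  rw [EuclideanSpace.norm_eq, Real.sq_sqrt (by positivity)]
  exact Finset.sum_congr rfl fun α _ => by rw [Real.norm_eq_abs, sq_abs]

lemma stationarity {m N : ℕ}
    (f : Fin N → EuclideanSpace ℝ (Fin m) → EuclideanSpace ℝ (Fin m))
    (F : Fin N → EuclideanSpace ℝ (Fin m) → ℝ)
    (hA1grad : ∀ i z, HasGradientAt (F i) (-(f i z)) z)
    (a : Fin N → Fin N → ℝ)
    (hsymm : ∀ i j, a i j = a j i)
    (hdiag : ∀ i, a i i = 0)
    (K : ℝ)
    (p : Fin N → EuclideanSpace ℝ (Fin m))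
    (hp : IsMinOn (FG F a K) Set.univ p) (i : Fin N) :
    f i (p i) = K • ∑ j, a i j • (p i - p j) := by
  classical
  set er := Finset.univ.erase i with her
  set g : EuclideanSpace ℝ (Fin m) → ℝ := fun y => F i y + (K / 2) * ∑ j ∈ er, a i j * ‖y - p j‖ ^ 2 with hg
  set R : ℝ := ∑ i' ∈ er, ∑ j' ∈ er, a i' j' * ‖p j' - p i'‖ ^ 2 with hR
  set C : ℝ := (∑ j ∈ er, F j (p j)) + (K / 2) * (R / 2) with hC
  have key : ∀ y : EuclideanSpace ℝ (Fin m), FG F a K (Function.update p i y) = g y + C := by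
    intro y
    have hFsum : ∑ j, F j (Function.update p i y j)
        = F i y + ∑ j ∈ er, F j (p j) := by
      rw [← Finset.add_sum_erase _ _ (Finset.mem_univ i)]
      congr 1
      · rw [Function.update_self]
      · exact Finset.sum_congr rfl fun j hj =>
          congrArg _ (Function.update_of_ne (Finset.ne_of_mem_erase hj) _ _)
    have hD : (∑ i', ∑ j', a i' j' * ‖Function.update p i y j' - Function.update p i y i'‖ ^ 2)
        = 2 * (∑ j ∈ er, a i j * ‖y - p j‖ ^ 2) + R := by
      rw [← Finset.add_sum_erase _ _ (Finset.mem_univ i)]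
      have hinner_i : ∑ j', a i j' * ‖Function.update p i y j' - Function.update p i y i‖ ^ 2
          = ∑ j ∈ er, a i j * ‖y - p j‖ ^ 2 := by
        rw [← Finset.add_sum_erase _ _ (Finset.mem_univ i), hdiag i]
        simp only [zero_mul, zero_add]
        refine Finset.sum_congr rfl fun j hj => ?_
        rw [Function.update_of_ne (Finset.ne_of_mem_erase hj), Function.update_self,
          norm_sub_rev]
      have hinner_ne : ∀ i' ∈ er,
          (∑ j', a i' j' * ‖Function.update p i y j' - Function.update p i y i'‖ ^ 2)
          = a i i' * ‖y - p i'‖ ^ 2 + ∑ j' ∈ er, a i' j' * ‖p j' - p i'‖ ^ 2 := by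
        intro i' hi'
        rw [← Finset.add_sum_erase _ _ (Finset.mem_univ i)]
        congr 1
        · rw [Function.update_self, Function.update_of_ne (Finset.ne_of_mem_erase hi'),
            hsymm i i']
        · refine Finset.sum_congr rfl fun j hj => ?_
          rw [Function.update_of_ne (Finset.ne_of_mem_erase hj),
            Function.update_of_ne (Finset.ne_of_mem_erase hi')]
      rw [hinner_i, Finset.sum_congr rfl hinner_ne, Finset.sum_add_distrib, ← hR]
      ring
    simp only [FG, hFsum, hD, hg, hC]
    ring
  -- local min of g at p i
  have hgmin : IsLocalMin g (p i) := by
    have hmin : ∀ y : EuclideanSpace ℝ (Fin m), g (p i) ≤ g y := by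
      intro y
      have h1 : FG F a K p ≤ FG F a K (Function.update p i y) :=
        hp (Set.mem_univ (Function.update p i y))
      have h2 : FG F a K p = g (p i) + C := by
        have h3 := key (p i)
        rwa [Function.update_eq_self] at h3
      rw [h2, key y] at h1
      linarith
    exact (isMinOn_iff.mpr fun y _ => hmin y).isLocalMin Filter.univ_mem
  -- gradient of g at p i
  set G : EuclideanSpace ℝ (Fin m) :=
    -(f i (p i)) + K • ∑ j ∈ er, a i j • (p i - p j) with hG
  have hF' : HasFDerivAt (F i)
      (InnerProductSpace.toDual ℝ (EuclideanSpace ℝ (Fin m)) (-(f i (p i)))) (p i) :=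
    (hA1grad i (p i)).hasFDerivAt
  have hq : ∀ j : Fin N, HasFDerivAt (fun y : EuclideanSpace ℝ (Fin m) => ‖y - p j‖ ^ 2)
      ((fderivInnerCLM ℝ (p i - p j, p i - p j)).comp
        ((ContinuousLinearMap.id ℝ _).prod (ContinuousLinearMap.id ℝ _))) (p i) := by
    intro j
    have hsub : HasFDerivAt (fun y : EuclideanSpace ℝ (Fin m) => y - p j)
        (ContinuousLinearMap.id ℝ _) (p i) := (hasFDerivAt_id _).sub_const _
    have hin := hsub.inner ℝ hsub
    have hfun : (fun y : EuclideanSpace ℝ (Fin m) => ‖y - p j‖ ^ 2)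
        = fun y => ⟪y - p j, y - p j⟫ := by
      funext y; rw [real_inner_self_eq_norm_sq]
    rw [hfun]
    exact hin
  have hsum : HasFDerivAt
      (fun y : EuclideanSpace ℝ (Fin m) => (K/2) * ∑ j ∈ er, a i j * ‖y - p j‖ ^ 2)
      ((K/2) • ∑ j ∈ er, a i j • ((fderivInnerCLM ℝ (p i - p j, p i - p j)).comp
        ((ContinuousLinearMap.id ℝ _).prod (ContinuousLinearMap.id ℝ _)))) (p i) := by
    apply HasFDerivAt.const_mul
    exact HasFDerivAt.fun_sum fun j _ => (hq j).const_mul (a i j)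
  have hDg : HasFDerivAt g
      (InnerProductSpace.toDual ℝ (EuclideanSpace ℝ (Fin m)) (-(f i (p i)))
        + (K/2) • ∑ j ∈ er, a i j • ((fderivInnerCLM ℝ (p i - p j, p i - p j)).comp
          ((ContinuousLinearMap.id ℝ _).prod (ContinuousLinearMap.id ℝ _)))) (p i) :=
    hF'.add hsum
  have hzero := hgmin.hasFDerivAt_eq_zero hDg
  have happ : ∀ v : EuclideanSpace ℝ (Fin m), ⟪G, v⟫ = 0 := by
    intro v
    have h0 := congrArg (fun (D : EuclideanSpace ℝ (Fin m) →L[ℝ] ℝ) => D v) hzero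
    simp only [ContinuousLinearMap.add_apply, ContinuousLinearMap.smul_apply,
      ContinuousLinearMap.coe_sum', Finset.sum_apply, ContinuousLinearMap.comp_apply,
      ContinuousLinearMap.prod_apply, ContinuousLinearMap.coe_id', id_eq,
      fderivInnerCLM_apply, InnerProductSpace.toDual_apply_apply,
      ContinuousLinearMap.zero_apply, smul_eq_mul] at h0
    rw [hG, inner_add_left, real_inner_smul_left, sum_inner]
    simp only [real_inner_smul_left]
    rw [← h0]
    congr 1
    rw [Finset.mul_sum, Finset.mul_sum]
    refine Finset.sum_congr rfl fun j _ => ?_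
    rw [real_inner_comm v (p i - p j)]
    ring
  have hG0 : G = 0 := by
    have h1 := happ G
    rwa [inner_self_eq_zero] at h1
  have hfull : ∑ j ∈ er, a i j • (p i - p j) = ∑ j, a i j • (p i - p j) := by
    rw [← Finset.sum_erase_add _ _ (Finset.mem_univ i), sub_self, smul_zero, add_zero]
  rw [hG, hfull] at hG0
  have h3 : f i (p i) - K • ∑ j, a i j • (p i - p j)
      = -(-f i (p i) + K • ∑ j, a i j • (p i - p j)) := by abel
  rw [hG0, neg_zero] at h3
  exact sub_eq_zero.mp h3

/-- **Minimizer spread bound** (estimate (17) in the proof of Theorem 2): under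
Assumption A1, over a fixed undirected connected weighted graph with Laplacian `P`
whose second smallest eigenvalue is `λ₂* > 0` (characterized here as the least
eigenvalue of `P` admitting an eigenvector orthogonal to the all-ones vector), every
global minimizer `p` of `F_G(·; K)` with `K > 0` satisfies
`∑ᵢ |pᵢ − p_ave|² ≤ (L / (K λ₂*))²`, where `L` is the Euclidean norm of the stacked
vector `(f₁(p₁), …, f_N(p_N))`. -/
theorem statement15
    {m N : ℕ} (hm : 0 < m) (hN : 0 < N)
    (f : Fin N → EuclideanSpace ℝ (Fin m) → EuclideanSpace ℝ (Fin m))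
    (F : Fin N → EuclideanSpace ℝ (Fin m) → ℝ)
    -- Assumption A1
    (hA1smooth : ∀ i, ContDiff ℝ 1 (F i))
    (hA1convex : ∀ i, ConvexOn ℝ Set.univ (F i))
    (hA1argmin : ∀ i, ∃ z, IsMinOn (F i) Set.univ z)
    (hA1grad : ∀ i z, HasGradientAt (F i) (-(f i z)) z)
    -- fixed undirected connected graph with positive symmetric weights
    (a : Fin N → Fin N → ℝ)
    (hsymm : ∀ i j, a i j = a j i)
    (hnonneg : ∀ i j, 0 ≤ a i j)
    (hdiag : ∀ i, a i i = 0)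
    (hconn : ∀ i j : Fin N, Relation.ReflTransGen (fun p q => 0 < a p q) i j)
    -- the weighted Laplacian P = D − A of the graph
    (P : Matrix (Fin N) (Fin N) ℝ)
    (hP : ∀ i j, P i j = if i = j then ∑ k, a i k else -(a i j))
    -- λ₂* is the second smallest eigenvalue of P: the least eigenvalue of P
    -- attained on a nonzero vector orthogonal to the all-ones direction
    (lam2 : ℝ) (hlam2pos : 0 < lam2)
    (hlam2 : IsLeast
      {r : ℝ | ∃ v : Fin N → ℝ, v ≠ 0 ∧ (∑ i, v i) = 0 ∧ P.mulVec v = r • v} lam2)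
    -- a global minimizer of F_G(·; K) with K > 0
    (K : ℝ) (hK : 0 < K)
    (p : Fin N → EuclideanSpace ℝ (Fin m))
    (hp : IsMinOn (FG F a K) Set.univ p) :
    ∑ i, ‖p i - (N : ℝ)⁻¹ • ∑ k, p k‖ ^ 2 ≤
      (Real.sqrt (∑ i, ‖f i (p i)‖ ^ 2) / (K * lam2)) ^ 2 := by
  classical
  -- basic matrix facts
  have hPsymm : ∀ i j, P i j = P j i := by
    intro i j
    by_cases h : i = j
    · subst h; rfl
    · rw [hP i j, hP j i, if_neg h, if_neg (Ne.symm h), hsymm]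
  have hPherm : P.IsHermitian := by
    unfold Matrix.IsHermitian
    ext i j
    simp [Matrix.conjTranspose_apply, hPsymm i j]
  have hrow : ∀ i, ∑ j, P i j = 0 := by
    intro i
    rw [← Finset.add_sum_erase _ _ (Finset.mem_univ i), hP i i, if_pos rfl]
    have h1 : ∑ j ∈ Finset.univ.erase i, P i j = -∑ j ∈ Finset.univ.erase i, a i j := by
      rw [← Finset.sum_neg_distrib]
      exact Finset.sum_congr rfl fun j hj => by
        rw [hP i j, if_neg (Ne.symm (Finset.ne_of_mem_erase hj))]
    have h2 : ∑ k, a i k = ∑ j ∈ Finset.univ.erase i, a i j := by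
      rw [← Finset.add_sum_erase _ _ (Finset.mem_univ i), hdiag i, zero_add]
    rw [h1, h2]
    ring
  -- stationarity
  have hst : ∀ i, f i (p i) = K • ∑ j, a i j • (p i - p j) :=
    stationarity f F hA1grad a hsymm hdiag K p hp
  -- centered vectors
  set pave : EuclideanSpace ℝ (Fin m) := (N : ℝ)⁻¹ • ∑ k, p k with hpave
  set q : Fin N → EuclideanSpace ℝ (Fin m) := fun j => p j - pave with hq
  have hNne : (N : ℝ) ≠ 0 := Nat.cast_ne_zero.mpr hN.ne'
  have hqsum : ∑ j, q j = 0 := by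
    rw [hq]
    simp only [Finset.sum_sub_distrib, Finset.sum_const, Finset.card_univ,
      Fintype.card_fin]
    rw [← Nat.cast_smul_eq_nsmul (R := ℝ), smul_smul, mul_inv_cancel₀ hNne, one_smul, sub_self]
  have hsubeq : ∀ i j, p i - p j = q i - q j := by
    intro i j
    rw [hq]
    exact (sub_sub_sub_cancel_right _ _ _).symm
  -- coordinates
  set w : Fin m → Fin N → ℝ := fun α j => q j α with hw
  have hwsum : ∀ α, ∑ j, w α j = 0 := by
    intro α
    have := congrArg (fun x => (EuclideanSpace.proj α : EuclideanSpace ℝ (Fin m) →L[ℝ] ℝ) x) hqsum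
    simpa [map_sum] using this
  have hmul : ∀ (i : Fin N) (α : Fin m), P.mulVec (w α) i = ∑ j, a i j * (w α i - w α j) := by
    intro i α
    unfold Matrix.mulVec dotProduct
    have h3 : ∀ j, a i j * (w α i - w α j) = a i j * w α i - a i j * w α j := fun j => by ring
    simp only [h3]
    rw [Finset.sum_sub_distrib, ← Finset.sum_mul]
    rw [← Finset.add_sum_erase _ (fun j => P i j * w α j) (Finset.mem_univ i), hP i i, if_pos rfl]
    have h4 : ∑ j ∈ Finset.univ.erase i, P i j * w α j
        = -∑ j ∈ Finset.univ.erase i, a i j * w α j := by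
      rw [← Finset.sum_neg_distrib]
      exact Finset.sum_congr rfl fun j hj => by
        rw [hP i j, if_neg (Ne.symm (Finset.ne_of_mem_erase hj))]; ring
    have h5 : ∑ j, a i j * w α j = ∑ j ∈ Finset.univ.erase i, a i j * w α j := by
      rw [← Finset.add_sum_erase _ _ (Finset.mem_univ i), hdiag i, zero_mul, zero_add]
    rw [h4, h5]
    ring
  -- f coordinates
  have hfco : ∀ (i : Fin N) (α : Fin m), f i (p i) α = K * P.mulVec (w α) i := by
    intro i α
    have h := congrArg
      (fun x => (EuclideanSpace.proj α : EuclideanSpace ℝ (Fin m) →L[ℝ] ℝ) x) (hst i)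
    simp only [map_smul, map_sum, smul_eq_mul] at h
    rw [hmul i α]
    have h7 : ∀ j, (EuclideanSpace.proj α : EuclideanSpace ℝ (Fin m) →L[ℝ] ℝ) (p i - p j)
        = w α i - w α j := fun j => by
      show (p i - p j) α = w α i - w α j
      rw [hsubeq i j]; rfl
    calc f i (p i) α
        = (EuclideanSpace.proj α : EuclideanSpace ℝ (Fin m) →L[ℝ] ℝ) (f i (p i)) := rfl
      _ = K * ∑ j, a i j *
            (EuclideanSpace.proj α : EuclideanSpace ℝ (Fin m) →L[ℝ] ℝ) (p i - p j) := h
      _ = K * ∑ j, a i j * (w α i - w α j) := by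
          congr 1
          exact Finset.sum_congr rfl fun j _ => by rw [h7 j]
  -- main estimate
  set LHS := ∑ i, ‖q i‖ ^ 2 with hLHS
  set T := ∑ i, ‖f i (p i)‖ ^ 2 with hT
  have hTnonneg : 0 ≤ T := Finset.sum_nonneg fun i _ => sq_nonneg _
  have hmain : (K * lam2) ^ 2 * LHS ≤ T := by
    have h10 : LHS = ∑ α, ∑ i, w α i ^ 2 := by
      rw [hLHS, Finset.sum_comm]
      exact Finset.sum_congr rfl fun i _ => eucl_norm_sq (q i)
    have h11 : T = K ^ 2 * ∑ α, ∑ i, P.mulVec (w α) i ^ 2 := by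
      rw [hT]
      have h14 : ∀ i, ‖f i (p i)‖ ^ 2 = ∑ α, K ^ 2 * P.mulVec (w α) i ^ 2 := by
        intro i
        rw [eucl_norm_sq]
        exact Finset.sum_congr rfl fun α _ => by rw [hfco i α]; ring
      rw [Finset.sum_congr rfl fun i _ => h14 i, Finset.sum_comm, Finset.mul_sum]
      exact Finset.sum_congr rfl fun α _ => by rw [Finset.mul_sum]
    rw [h10, h11, Finset.mul_sum, Finset.mul_sum]
    have h12 : ∀ α, (K * lam2) ^ 2 * ∑ i, w α i ^ 2 ≤ K ^ 2 * ∑ i, P.mulVec (w α) i ^ 2 := by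
      intro α
      have h13 := rayleigh_sq P hPherm hrow lam2 hlam2pos hlam2 (w α) (hwsum α)
      calc (K * lam2) ^ 2 * ∑ i, w α i ^ 2 = K ^ 2 * (lam2 ^ 2 * ∑ i, w α i ^ 2) := by ring
        _ ≤ K ^ 2 * ∑ i, P.mulVec (w α) i ^ 2 := by
            apply mul_le_mul_of_nonneg_left h13 (by positivity)
    exact Finset.sum_le_sum fun α _ => h12 α
  have hKl : (0 : ℝ) < (K * lam2) ^ 2 := by positivity
  have hgoal : LHS ≤ T / (K * lam2) ^ 2 := by
    rw [le_div_iff₀ hKl]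
    calc LHS * (K * lam2) ^ 2 = (K * lam2) ^ 2 * LHS := by ring
      _ ≤ T := hmain
  calc ∑ i, ‖p i - (N : ℝ)⁻¹ • ∑ k, p k‖ ^ 2 = LHS := by
        rw [hLHS]
      _ ≤ T / (K * lam2) ^ 2 := hgoal
      _ = (Real.sqrt T / (K * lam2)) ^ 2 := by
          rw [div_pow, Real.sq_sqrt hTnonneg]
end

section
/- Let H : ℝ^n → ℝ be a C¹ convex function whose set of global minimizers argmin H is nonempty. Then every solution x(t) of the gradient flow ẋ = −∇H(x), defined for all t ≥ 0, satisfies lim_{t→∞} dist(x(t), argmin H) = 0, where dist denotes Euclidean distance to the set argmin H. -/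
open Filter

lemma statement16_grad_ineq {E : Type*} [NormedAddCommGroup E] [InnerProductSpace ℝ E] [CompleteSpace E]
    {H : E → ℝ} {gy y : E} (hconvex : ConvexOn ℝ Set.univ H)
    (hg : HasGradientAt H gy y) (w : E) :
    inner ℝ gy (w - y) ≤ H w - H y := by
  have h1 : HasDerivAt (fun s : ℝ => y + s • (w - y)) (w - y) 0 := by
    simpa using ((hasDerivAt_id (0:ℝ)).smul_const (w - y)).const_add y
  have hderiv : HasDerivAt (fun s : ℝ => H (y + s • (w - y))) (inner ℝ gy (w - y) : ℝ) 0 := by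
    have := HasFDerivAt.comp_hasDerivAt 0 (by simpa using hg.hasFDerivAt) h1
    exact this
  have hslope := hasDerivAt_iff_tendsto_slope.mp hderiv
  have hslope' : Tendsto (slope (fun s : ℝ => H (y + s • (w - y))) 0) (nhdsWithin 0 (Set.Ioi 0))
      (nhds (inner ℝ gy (w - y) : ℝ)) :=
    hslope.mono_left (nhdsWithin_mono _ (fun s hs => ne_of_gt hs))
  refine le_of_tendsto hslope' ?_
  filter_upwards [Ioc_mem_nhdsGT one_pos] with s hs
  have hs0 : (0:ℝ) < s := hs.1
  rw [slope_def_field]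
  have hid : y + s • (w - y) = (1 - s) • y + s • w := by module
  have hc := hconvex.2 (Set.mem_univ y) (Set.mem_univ w)
      (by linarith [hs.2] : (0:ℝ) ≤ 1 - s) hs0.le (by ring)
  simp only [smul_eq_mul] at hc
  rw [hid] at *
  simp only [zero_smul, mul_zero, add_zero, sub_zero,
    show y + (0:ℝ) • (w - y) = y by simp] at *
  rw [div_le_iff₀ hs0]
  nlinarith [hc]


/-- **Gradient flow convergence to the argmin** (used in the proofs of Theorems 1
and 2): if `H : ℝⁿ → ℝ` is a `C¹` convex function with a nonempty set of global
minimizers, then every solution of `ẋ = −∇H(x)` defined for all `t ≥ 0` satisfies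
`dist(x(t), argmin H) → 0` as `t → ∞`. -/
theorem statement16
    {n : ℕ}
    (H : EuclideanSpace ℝ (Fin n) → ℝ)
    (g : EuclideanSpace ℝ (Fin n) → EuclideanSpace ℝ (Fin n))
    (hsmooth : ContDiff ℝ 1 H)
    (hconvex : ConvexOn ℝ Set.univ H)
    (hgrad : ∀ y, HasGradientAt H (g y) y)
    (hargmin : ∃ z, IsMinOn H Set.univ z)
    (x : ℝ → EuclideanSpace ℝ (Fin n))
    (hx : ∀ t : ℝ, 0 ≤ t → HasDerivWithinAt x (-(g (x t))) (Set.Ici 0) t) :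
    Tendsto (fun t => Metric.infDist (x t) {z | IsMinOn H Set.univ z})
      atTop (nhds 0) := by
  classical
  obtain ⟨z, hz⟩ := hargmin
  have hHz : ∀ y, H z ≤ H y := fun y => isMinOn_iff.mp hz y (Set.mem_univ y)
  set S : Set (EuclideanSpace ℝ (Fin n)) := {z | IsMinOn H Set.univ z} with hSdef
  have key : ∀ y w, (inner ℝ (g y) (w - y) : ℝ) ≤ H w - H y :=
    fun y w => statement16_grad_ineq hconvex (hgrad y) w
  -- the squared distance to z
  set φ : ℝ → ℝ := fun t => (inner ℝ (x t - z) (x t - z) : ℝ) with hφdef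
  have hφnonneg : ∀ t, 0 ≤ φ t := fun t => real_inner_self_nonneg
  have hφderiv : ∀ t ∈ Set.Ici (0:ℝ), HasDerivWithinAt φ
      (2 * inner ℝ (-(g (x t))) (x t - z)) (Set.Ici 0) t := by
    intro t ht
    have h1 : HasDerivWithinAt (fun t => x t - z) (-(g (x t))) (Set.Ici 0) t :=
      (hx t ht).sub_const z
    have h2 := h1.inner ℝ h1
    refine h2.congr_deriv ?_
    rw [real_inner_comm]
    ring
  -- generic antitone criterion on Ici 0
  have hanti : ∀ (f f' : ℝ → ℝ),
      (∀ t ∈ Set.Ici (0:ℝ), HasDerivWithinAt f (f' t) (Set.Ici 0) t) →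
      (∀ t ∈ Set.Ici (0:ℝ), f' t ≤ 0) → AntitoneOn f (Set.Ici 0) := by
    intro f f' hd hnp
    refine antitoneOn_of_hasDerivWithinAt_nonpos (f' := f') (convex_Ici 0)
      (fun t ht => (hd t ht).continuousWithinAt) ?_ ?_
    · intro t ht
      rw [interior_Ici] at ht ⊢
      exact (hd t (Set.Ioi_subset_Ici_self ht)).mono Set.Ioi_subset_Ici_self
    · intro t ht
      rw [interior_Ici] at ht
      exact hnp t (Set.Ioi_subset_Ici_self ht)
  -- key inner product bound
  have hib : ∀ t : ℝ, (inner ℝ (-(g (x t))) (x t - z) : ℝ) ≤ H z - H (x t) := by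
    intro t
    have h1 := key (x t) z
    have h2 : (inner ℝ (-(g (x t))) (x t - z) : ℝ) = inner ℝ (g (x t)) (z - x t) := by
      rw [show x t - z = -(z - x t) by abel, inner_neg_left, inner_neg_right, neg_neg]
    linarith [h2 ▸ h1]
  have hφanti : AntitoneOn φ (Set.Ici 0) := by
    refine hanti _ _ hφderiv fun t ht => ?_
    have := hib t
    have := hHz (x t)
    nlinarith
  -- H ∘ x is antitone
  have hHderiv : ∀ t ∈ Set.Ici (0:ℝ), HasDerivWithinAt (fun t => H (x t))
      (-‖g (x t)‖^2) (Set.Ici 0) t := by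
    intro t ht
    have h0 := (hgrad (x t)).hasFDerivAt.comp_hasDerivWithinAt t (hx t ht)
    have he : ((InnerProductSpace.toDual ℝ _) (g (x t))) (-(g (x t))) = -‖g (x t)‖^2 := by
      rw [InnerProductSpace.toDual_apply_apply, inner_neg_right, real_inner_self_eq_norm_sq]
    rw [he] at h0
    exact h0
  have hHanti : AntitoneOn (fun t => H (x t)) (Set.Ici 0) :=
    hanti _ _ hHderiv fun t _ => neg_nonpos.mpr (by positivity)
  -- H (x t) get arbitrarily close to the minimum value
  have hHsmall : ∀ δ : ℝ, 0 < δ → ∀ᶠ t in atTop, H (x t) < H z + δ := by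
    intro δ hδ
    by_contra hcon
    rw [not_eventually] at hcon
    have hall : ∀ t : ℝ, 0 ≤ t → H z + δ ≤ H (x t) := by
      intro t ht
      obtain ⟨t', hnl, htt'⟩ := (hcon.and_eventually (eventually_ge_atTop t)).exists
      exact le_trans (not_lt.mp hnl) (hHanti ht (le_trans ht htt') htt')
    -- then φ decreases at uniform rate, contradiction
    set ψ : ℝ → ℝ := fun t => φ t + 2*δ*t with hψdef
    have hψanti : AntitoneOn ψ (Set.Ici 0) := by
      refine hanti _ (fun t => 2 * inner ℝ (-(g (x t))) (x t - z) + 2*δ) ?_ ?_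
      · intro t ht
        refine (hφderiv t ht).add ?_
        simpa using (hasDerivWithinAt_id t (Set.Ici 0)).const_mul (2*δ)
      · intro t ht
        show 2 * (inner ℝ (-(g (x t))) (x t - z) : ℝ) + 2*δ ≤ 0
        nlinarith [hib t, hall t ht]
    set T : ℝ := φ 0 / (2*δ) + 1 with hTdef
    have hT0 : (0:ℝ) ≤ T := by
      rw [hTdef]
      have h := div_nonneg (hφnonneg 0) (by linarith : (0:ℝ) ≤ 2*δ)
      linarith
    have h1 : ψ T ≤ ψ 0 := hψanti Set.self_mem_Ici hT0 hT0
    have h2 : φ 0 / (2*δ) * (2*δ) = φ 0 := div_mul_cancel₀ _ (by positivity)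
    have := hφnonneg T
    simp only [hψdef, mul_zero, add_zero] at h1
    rw [hTdef] at h1
    nlinarith [h2]
  -- the trajectory stays in a ball
  set R : ℝ := ‖x 0 - z‖ with hRdef
  have hball : ∀ t : ℝ, 0 ≤ t → x t ∈ Metric.closedBall z R := by
    intro t ht
    have h1 : φ t ≤ φ 0 := hφanti Set.self_mem_Ici ht ht
    rw [hφdef] at h1
    simp only [real_inner_self_eq_norm_sq] at h1
    rw [Metric.mem_closedBall, dist_eq_norm]
    exact le_of_pow_le_pow_left₀ two_ne_zero (norm_nonneg _) h1
  -- conclude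
  rw [Metric.tendsto_nhds]
  intro ε hε
  set K := Metric.closedBall z R ∩ {y | ε ≤ Metric.infDist y S} with hKdef
  have hKc : IsCompact K := (isCompact_closedBall z R).inter_right
    (isClosed_le continuous_const (Metric.continuous_infDist_pt S))
  have main : ∀ᶠ t in atTop, Metric.infDist (x t) S < ε := by
    rcases Set.eq_empty_or_nonempty K with hKe | hKne
    · filter_upwards [eventually_ge_atTop (0:ℝ)] with t ht
      by_contra hcon
      have : x t ∈ K := ⟨hball t ht, not_lt.mp hcon⟩
      rw [hKe] at this
      exact this
    · obtain ⟨y0, hy0K, hy0min⟩ := hKc.exists_isMinOn hKne hsmooth.continuous.continuousOn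
      have hy0 : H z < H y0 := by
        rcases (hHz y0).lt_or_eq with h | h
        · exact h
        · exfalso
          have hy0S : y0 ∈ S := by
            rw [hSdef, Set.mem_setOf_eq]
            exact isMinOn_iff.mpr fun w _ => by rw [← h]; exact hHz w
          have h2 := hy0K.2
          rw [Set.mem_setOf_eq, Metric.infDist_zero_of_mem hy0S] at h2
          linarith
      filter_upwards [hHsmall (H y0 - H z) (by linarith), eventually_ge_atTop (0:ℝ)]
        with t h1 h2
      by_contra hcon
      have hmem : x t ∈ K := ⟨hball t h2, not_lt.mp hcon⟩
      have := isMinOn_iff.mp hy0min (x t) hmem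
      linarith
  filter_upwards [main] with t ht
  rw [Real.dist_eq, sub_zero, abs_of_nonneg Metric.infDist_nonneg]
  exact ht
end

section
/- Let m = 1 and suppose Assumption A1 holds with F_i : ℝ → ℝ such that each argmin F_i is a nonempty bounded set, say argmin F_i = [b_i, d_i]. Let G be a fixed undirected connected graph with positive symmetric weights a_{ij} = a_{ji} > 0, and set b_* := min{b_1,…,b_N} and d^* := max{d_1,…,d_N}. Then for every K ≥ 0, every global minimizer z = (z_1,…,z_N) of F_G(·; K) satisfies z_i ∈ [b_*, d^*] for all i; that is, argmin F_G(·; K) ⊆ [b_*, d^*]^N for all K ≥ 0. -/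
/-- Strict monotonicity of a convex function to the right of its argmin interval. -/
lemma mono_right (F : ℝ → ℝ) (hc : ConvexOn ℝ Set.univ F) (b d : ℝ)
    (hbd : b ≤ d) (h : {z | IsMinOn F Set.univ z} = Set.Icc b d)
    {s t : ℝ} (hs : d ≤ s) (hst : s < t) : F s < F t := by
  have hdmin : IsMinOn F Set.univ d := by
    have : d ∈ {z | IsMinOn F Set.univ z} := by rw [h]; exact ⟨hbd, le_refl d⟩
    exact this
  have hnotmin : ∀ u, d < u → F d < F u := by
    intro u hu
    have hu' : u ∉ Set.Icc b d := fun h' => absurd h'.2 (not_le.2 hu)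
    rw [← h] at hu'
    have hex : ¬ ∀ x, F u ≤ F x := fun hall => hu' (isMinOn_iff.2 fun x _ => hall x)
    push_neg at hex
    obtain ⟨x, hx⟩ := hex
    exact lt_of_le_of_lt (hdmin (Set.mem_univ x)) hx
  rcases eq_or_lt_of_le hs with rfl | hds
  · exact hnotmin t hst
  · by_contra hts
    push_neg at hts
    have htd : (0:ℝ) < t - d := by linarith
    set lam := (t - s) / (t - d) with hlam
    set mu := (s - d) / (t - d) with hmu
    have hlam0 : 0 < lam := div_pos (by linarith) htd
    have hmu0 : 0 < mu := div_pos (by linarith) htd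
    have hsum : lam + mu = 1 := by
      rw [hlam, hmu, ← add_div, div_eq_one_iff_eq htd.ne']; ring
    have hpt : lam • d + mu • t = s := by
      simp only [smul_eq_mul, hlam, hmu]; field_simp; ring
    have hconv := hc.2 (Set.mem_univ d) (Set.mem_univ t) hlam0.le hmu0.le hsum
    rw [hpt] at hconv
    have h1 : lam * F d < lam * F s :=
      mul_lt_mul_of_pos_left (hnotmin s hds) hlam0
    have h2 : mu * F t ≤ mu * F s := mul_le_mul_of_nonneg_left hts hmu0.le
    have h3 : lam * F s + mu * F s = F s := by rw [← add_mul, hsum, one_mul]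
    simp only [smul_eq_mul] at hconv
    linarith

/-- Strict monotonicity (decreasing) of a convex function to the left of its argmin interval. -/
lemma mono_left (F : ℝ → ℝ) (hc : ConvexOn ℝ Set.univ F) (b d : ℝ)
    (hbd : b ≤ d) (h : {z | IsMinOn F Set.univ z} = Set.Icc b d)
    {s t : ℝ} (hs : s ≤ b) (hst : t < s) : F s < F t := by
  have hbmin : IsMinOn F Set.univ b := by
    have : b ∈ {z | IsMinOn F Set.univ z} := by rw [h]; exact ⟨le_refl b, hbd⟩
    exact this
  have hnotmin : ∀ u, u < b → F b < F u := by
    intro u hu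
    have hu' : u ∉ Set.Icc b d := fun h' => absurd h'.1 (not_le.2 hu)
    rw [← h] at hu'
    have hex : ¬ ∀ x, F u ≤ F x := fun hall => hu' (isMinOn_iff.2 fun x _ => hall x)
    push_neg at hex
    obtain ⟨x, hx⟩ := hex
    exact lt_of_le_of_lt (hbmin (Set.mem_univ x)) hx
  rcases eq_or_lt_of_le hs with rfl | hsb
  · exact hnotmin t hst
  · by_contra hts
    push_neg at hts
    have htd : (0:ℝ) < b - t := by linarith
    set lam := (s - t) / (b - t) with hlam
    set mu := (b - s) / (b - t) with hmu
    have hlam0 : 0 < lam := div_pos (by linarith) htd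
    have hmu0 : 0 < mu := div_pos (by linarith) htd
    have hsum : lam + mu = 1 := by
      rw [hlam, hmu, ← add_div, div_eq_one_iff_eq htd.ne']; ring
    have hpt : lam • b + mu • t = s := by
      simp only [smul_eq_mul, hlam, hmu]; field_simp; ring
    have hconv := hc.2 (Set.mem_univ b) (Set.mem_univ t) hlam0.le hmu0.le hsum
    rw [hpt] at hconv
    have h1 : lam * F b < lam * F s :=
      mul_lt_mul_of_pos_left (hnotmin s hsb) hlam0
    have h2 : mu * F t ≤ mu * F s := mul_le_mul_of_nonneg_left hts hmu0.le
    have h3 : lam * F s + mu * F s = F s := by rw [← add_mul, hsum, one_mul]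
    simp only [smul_eq_mul] at hconv
    linarith

/-- **Part (iii) of the proof of Proposition 2**: with scalar node states (`m = 1`),
under Assumption A1, if `argmin Fᵢ = [bᵢ, dᵢ]` is nonempty and bounded for each `i`
and the graph is fixed, undirected and connected with positive symmetric weights,
then for every `K ≥ 0` every global minimizer `z` of `F_G(·; K)` satisfies
`zᵢ ∈ [b_*, d^*]` for all `i`, where `b_* = minᵢ bᵢ`, `d^* = maxᵢ dᵢ`. -/
theorem statement18
    {N : ℕ} (hN : 0 < N)
    (f : Fin N → ℝ → ℝ) (F : Fin N → ℝ → ℝ)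
    -- Assumption A1 with m = 1
    (hA1smooth : ∀ i, ContDiff ℝ 1 (F i))
    (hA1convex : ∀ i, ConvexOn ℝ Set.univ (F i))
    (hA1grad : ∀ i z, HasDerivAt (F i) (-(f i z)) z)
    -- argmin Fᵢ = [bᵢ, dᵢ] nonempty and bounded
    (b d : Fin N → ℝ) (hbd : ∀ i, b i ≤ d i)
    (hargmin : ∀ i, {z | IsMinOn (F i) Set.univ z} = Set.Icc (b i) (d i))
    -- fixed undirected connected graph with positive symmetric weights
    (a : Fin N → Fin N → ℝ)
    (hsymm : ∀ i j, a i j = a j i)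
    (hnonneg : ∀ i j, 0 ≤ a i j)
    (hdiag : ∀ i, a i i = 0)
    (hconn : ∀ i j : Fin N, Relation.ReflTransGen (fun p q => 0 < a p q) i j) :
    ∀ K : ℝ, 0 ≤ K → ∀ z : Fin N → ℝ, IsMinOn (FG F a K) Set.univ z →
      ∀ i, z i ∈ Set.Icc (⨅ j, b j) (⨆ j, d j) := by
  intro K hK z hmin i
  haveI : Nonempty (Fin N) := ⟨⟨0, hN⟩⟩
  set m := ⨅ j, b j with hm
  set M := ⨆ j, d j with hM
  have hble : ∀ j, m ≤ b j := fun j =>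
    ciInf_le (Set.Finite.bddBelow (Set.finite_range b)) j
  have hdle : ∀ j, d j ≤ M := fun j =>
    le_ciSup (Set.Finite.bddAbove (Set.finite_range d)) j
  have hmM : m ≤ M := le_trans (hble i) (le_trans (hbd i) (hdle i))
  by_contra hout
  set w : Fin N → ℝ := fun j => max m (min (z j) M) with hw
  -- weak comparison at every node
  have hweak : ∀ j, F j (w j) ≤ F j (z j) := by
    intro j
    rcases le_or_gt (z j) M with h1 | h1
    · rcases le_or_gt m (z j) with h2 | h2
      · have heq : w j = z j := by
          simp only [hw, min_eq_left h1, max_eq_right h2]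
        rw [heq]
      · have hwj : w j = m := by
          simp only [hw, min_eq_left h1, max_eq_left h2.le]
        rw [hwj]
        exact (mono_left (F j) (hA1convex j) (b j) (d j) (hbd j) (hargmin j)
          (hble j) h2).le
    · have hwj : w j = M := by
        simp only [hw, min_eq_right h1.le, max_eq_right hmM]
      rw [hwj]
      exact (mono_right (F j) (hA1convex j) (b j) (d j) (hbd j) (hargmin j)
        (hdle j) h1).le
  -- strict comparison at node i
  have hstricti : F i (w i) < F i (z i) := by
    rcases lt_or_ge (z i) m with h2 | h2'
    · have hwj : w i = m := by
        simp only [hw, min_eq_left (le_trans h2.le hmM), max_eq_left h2.le]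
      rw [hwj]
      exact mono_left (F i) (hA1convex i) (b i) (d i) (hbd i) (hargmin i)
        (hble i) h2
    · have h1 : M < z i := by
        rw [Set.mem_Icc] at hout; push_neg at hout; exact hout h2'
      have hwj : w i = M := by
        simp only [hw, min_eq_right h1.le, max_eq_right hmM]
      rw [hwj]
      exact mono_right (F i) (hA1convex i) (b i) (d i) (hbd i) (hargmin i)
        (hdle i) h1
  -- the clamp is 1-Lipschitz
  have hlip : ∀ p q : Fin N, |w q - w p| ≤ |z q - z p| := by
    intro p q
    have h1 : |max m (min (z q) M) - max m (min (z p) M)| ≤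
        max |m - m| |min (z q) M - min (z p) M| :=
      abs_max_sub_max_le_max m (min (z q) M) m (min (z p) M)
    have h2 : |min (z q) M - min (z p) M| ≤ max |z q - z p| |M - M| :=
      abs_min_sub_min_le_max (z q) M (z p) M
    simp only [sub_self, abs_zero] at h1 h2
    calc |w q - w p| ≤ max 0 |min (z q) M - min (z p) M| := h1
      _ = |min (z q) M - min (z p) M| := max_eq_right (abs_nonneg _)
      _ ≤ max |z q - z p| 0 := h2
      _ = |z q - z p| := max_eq_left (abs_nonneg _)
  have hquad : (∑ p, ∑ q, a p q * ‖w q - w p‖ ^ 2) ≤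
      ∑ p, ∑ q, a p q * ‖z q - z p‖ ^ 2 := by
    apply Finset.sum_le_sum; intro p _
    apply Finset.sum_le_sum; intro q _
    apply mul_le_mul_of_nonneg_left _ (hnonneg p q)
    rw [Real.norm_eq_abs, Real.norm_eq_abs]
    exact pow_le_pow_left₀ (abs_nonneg _) (hlip p q) 2
  have hsumF : (∑ j, F j (w j)) < ∑ j, F j (z j) :=
    Finset.sum_lt_sum (fun j _ => hweak j) ⟨i, Finset.mem_univ i, hstricti⟩
  have hFG : FG F a K w < FG F a K z := by
    unfold FG
    have h2 : K / 2 * ((∑ p, ∑ q, a p q * ‖w q - w p‖ ^ 2) / 2) ≤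
        K / 2 * ((∑ p, ∑ q, a p q * ‖z q - z p‖ ^ 2) / 2) := by
      apply mul_le_mul_of_nonneg_left _ (by positivity)
      linarith
    linarith
  exact absurd (isMinOn_iff.1 hmin w (Set.mem_univ w)) (not_le.2 hFG)
end
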